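/- arXiv:2509.26624 — 6 statements merged into one kernel-verified Lean document; each statement's English description precedes it below -/
import Mathlib

section
/- Let r ∈ ℕ₀ and k ∈ {2^r, 2^r+1, …, 2^{r+1}−1}. Then for every x ∈ [0,1) one has ∫₀^x wal_k(t) dt = 2^{−r} · wal_k(x) · η(2^r x), where η : ℝ → ℝ is the 1-periodic function with η(x) = x for 0 ≤ x < 1/2 and η(x) = x − 1 for 1/2 ≤ x < 1. Consequently, sup_{x ∈ [0,1]} |∫₀^x wal_k(t) dt| = 2^{−(r+1)}. -/
/-!
For `2 ^ r ≤ k < 2 ^ (r + 1)` the function `walsh k` is a step function, constant on the dyadic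
intervals of length `2 ^ -(r + 1)`, and since the top digit `κ_r` is `1` it changes sign between
the two halves of every dyadic interval of length `2 ^ -r`. A primitive of such a step function
vanishes at the multiples of `2 ^ -r` and is a tent of height `2 ^ -(r + 1)` on each of these
intervals, which is the formula with `η`; the supremum is attained at `x = 2 ^ -(r + 1)`.
-/

open scoped Classical
open MeasureTheory

noncomputable section

/-- The binary digit `ξ_{i+1}` of `x ∈ [0,1)` (using the expansion with infinitely many
digits different from 1). -/
def rdigit (x : ℝ) (i : ℕ) : ℕ := (⌊x * 2 ^ (i + 1)⌋).toNat % 2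

/-- The `k`-th Walsh function in base `2`. -/
def walsh (k : ℕ) (x : ℝ) : ℝ :=
  (-1 : ℝ) ^ ∑ i ∈ Finset.range (Nat.size k), (Nat.testBit k i).toNat * rdigit x i

/-- The one-periodic function `η`, with `η x = x` for `0 ≤ x < 1/2` and `η x = x - 1` for
`1/2 ≤ x < 1`. -/
def eta (x : ℝ) : ℝ := if Int.fract x < 1 / 2 then Int.fract x else Int.fract x - 1

open Finset

section FloorStep

variable (w : ℕ → ℝ)

lemma intervalIntegrable_comp_natFloor (a b : ℝ) :
    IntervalIntegrable (fun u => w ⌊u⌋₊) volume a b := by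
  rw [intervalIntegrable_iff]
  refine Measure.integrableOn_of_bounded measure_Ioc_lt_top.ne
    (measurable_from_nat.comp Nat.measurable_floor).aestronglyMeasurable
    (M := ∑ i ∈ range (⌊max a b⌋₊ + 1), |w i|) ?_
  filter_upwards [ae_restrict_mem measurableSet_Ioc] with u hu
  have hu' : ⌊u⌋₊ ∈ range (⌊max a b⌋₊ + 1) :=
    mem_range_succ_iff.mpr (Nat.floor_le_floor hu.2)
  exact single_le_sum (f := fun i => |w i|) (fun i _ => abs_nonneg _) hu'

lemma integral_comp_natFloor_of_mem_Icc {n : ℕ} {b : ℝ} (hb : b ∈ Set.Icc (n : ℝ) (n + 1)) :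
    ∫ u in (n : ℝ)..b, w ⌊u⌋₊ = w n * (b - n) := by
  have hfloor : ∀ᵐ u, u ∈ Set.uIoc (n : ℝ) b → w ⌊u⌋₊ = w n := by
    filter_upwards [Measure.ae_ne volume ((n : ℝ) + 1)] with u hne hu
    rw [Set.uIoc_of_le hb.1] at hu
    rw [Nat.floor_eq_on_Ico n u ⟨hu.1.le, (hu.2.trans hb.2).lt_of_ne hne⟩]
  rw [intervalIntegral.integral_congr_ae hfloor, intervalIntegral.integral_const, smul_eq_mul,
    mul_comm]

lemma integral_comp_natFloor {s : ℝ} (hs : 0 ≤ s) :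
    ∫ u in (0 : ℝ)..s, w ⌊u⌋₊ = ∑ i ∈ range ⌊s⌋₊, w i + w ⌊s⌋₊ * (s - ⌊s⌋₊) := by
  have hunit : ∀ i : ℕ, ∫ u in (i : ℝ)..(i + 1 : ℕ), w ⌊u⌋₊ = w i := fun i => by
    rw [integral_comp_natFloor_of_mem_Icc w (by simp)]
    push_cast
    ring
  have hsum := intervalIntegral.sum_integral_adjacent_intervals (a := Nat.cast) (n := ⌊s⌋₊)
    fun i _ => intervalIntegrable_comp_natFloor w i (i + 1 : ℕ)
  rw [Nat.cast_zero] at hsum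
  rw [← intervalIntegral.integral_add_adjacent_intervals
      (intervalIntegrable_comp_natFloor w 0 ⌊s⌋₊) (intervalIntegrable_comp_natFloor w _ s),
    ← hsum, integral_comp_natFloor_of_mem_Icc w ⟨Nat.floor_le hs, (Nat.lt_floor_add_one s).le⟩]
  simp only [hunit]

end FloorStep

section Alternating

variable {w : ℕ → ℝ}

lemma sum_range_two_mul_eq_zero (hw : ∀ j, w (2 * j + 1) = -w (2 * j)) (j : ℕ) : ∑ i ∈ range (2 * j), w i = 0 := by
  induction j with
  | zero => simp
  | succ j ih => rw [mul_add_one, sum_range_succ, sum_range_succ, ih, hw]; ring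

lemma sum_range_add_mul_fract_eq (hw : ∀ j, w (2 * j + 1) = -w (2 * j)) {s : ℝ} (hs : 0 ≤ s) :
    ∑ i ∈ range ⌊s⌋₊, w i + w ⌊s⌋₊ * (s - ⌊s⌋₊) = 2 * w ⌊s⌋₊ * eta (s / 2) := by
  have hlo := Nat.floor_le hs
  have hhi := Nat.lt_floor_add_one s
  obtain ⟨j, hj⟩ := Nat.even_or_odd' ⌊s⌋₊
  have hj_le : (2 * j : ℝ) ≤ ⌊s⌋₊ ∧ (⌊s⌋₊ : ℝ) ≤ 2 * j + 1 := by
    rcases hj with hj | hj <;> rw [hj] <;> push_cast <;> constructor <;> linarith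
  have hfract : Int.fract (s / 2) = s / 2 - j :=
    Int.fract_eq_iff.mpr ⟨by linarith, by linarith, (j : ℤ), by push_cast; ring⟩
  rcases hj with hj | hj
  · rw [eta, hfract, if_pos (by push_cast [hj] at hhi; linarith), hj,
      sum_range_two_mul_eq_zero hw]
    push_cast
    ring
  · rw [eta, hfract, if_neg (by push_cast [hj] at hlo; linarith), hj, sum_range_succ,
      sum_range_two_mul_eq_zero hw, hw]
    push_cast
    ring

end Alternating

/-- The value of `walsh k` on `[n / 2 ^ (r + 1), (n + 1) / 2 ^ (r + 1))`, where the digit `ξ_{i+1}`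
is `n / 2 ^ (r - i) % 2`. -/
def walshStep (r k n : ℕ) : ℝ :=
  (-1 : ℝ) ^ ∑ i ∈ range (r + 1), (k.testBit i).toNat * (n / 2 ^ (r - i) % 2)

lemma rdigit_eq_floor_div {r i : ℕ} (hi : i ≤ r) (t : ℝ) :
    rdigit t i = ⌊t * 2 ^ (r + 1)⌋₊ / 2 ^ (r - i) % 2 := by
  have hpow : (2 : ℝ) ^ (r + 1) = 2 ^ (i + 1) * ((2 ^ (r - i) : ℕ) : ℝ) := by
    rw [Nat.cast_pow, Nat.cast_ofNat, ← pow_add]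
    congr 1
    omega
  rw [rdigit, Int.floor_toNat, ← Nat.floor_div_natCast, hpow, ← mul_assoc,
    mul_div_cancel_right₀ _ (by positivity)]

lemma walsh_eq_walshStep {r k : ℕ} (hk : k < 2 ^ (r + 1)) (t : ℝ) :
    walsh k t = walshStep r k ⌊t * 2 ^ (r + 1)⌋₊ := by
  have hsize : k.size ≤ r + 1 := Nat.size_le.mpr hk
  rw [walsh, walshStep]
  congr 1
  refine sum_subset (range_subset_range.mpr hsize) (fun i hi hik => ?_) |>.trans
    (sum_congr rfl fun i hi => ?_)
  · have : k.testBit i = false :=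
      Nat.testBit_lt_two_pow ((Nat.lt_size_self k).trans_le
        (Nat.pow_le_pow_right two_pos (by simpa using hik)))
    simp [this]
  · rw [rdigit_eq_floor_div (Nat.lt_succ_iff.mp (mem_range.mp hi))]

lemma walshStep_two_mul_add_one {r k : ℕ} (hk1 : 2 ^ r ≤ k) (hk2 : k < 2 ^ (r + 1)) (j : ℕ) :
    walshStep r k (2 * j + 1) = -walshStep r k (2 * j) := by
  have hlow : ∀ i < r, (2 * j + 1) / 2 ^ (r - i) = 2 * j / 2 ^ (r - i) := fun i hi => by
    obtain ⟨m, hm⟩ : ∃ m, r - i = m + 1 := ⟨r - i - 1, by omega⟩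
    rw [hm, pow_succ', ← Nat.div_div_eq_div_mul, ← Nat.div_div_eq_div_mul]
    congr 1
    omega
  rw [walshStep, walshStep, sum_range_succ, sum_range_succ,
    Nat.testBit_of_two_pow_le_and_two_pow_add_one_gt hk1 hk2,
    sum_congr rfl fun i hi => by rw [hlow i (mem_range.mp hi)]]
  simp [pow_add]

lemma abs_walsh (k : ℕ) (x : ℝ) : |walsh k x| = 1 := by
  rw [walsh, abs_pow, abs_neg, abs_one, one_pow]

lemma abs_eta_le (x : ℝ) : |eta x| ≤ 1 / 2 := by
  have h0 := Int.fract_nonneg x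
  have h1 := Int.fract_lt_one x
  rw [eta]
  split_ifs with h
  · rw [abs_of_nonneg h0]; linarith
  · rw [abs_of_nonpos (by linarith)]; linarith

lemma eta_one_half : eta (1 / 2) = -1 / 2 := by
  norm_num [eta, Int.fract_eq_self.mpr]

theorem integral_walsh_eq {r k : ℕ} (hk1 : 2 ^ r ≤ k) (hk2 : k < 2 ^ (r + 1)) {x : ℝ}
    (hx : 0 ≤ x) : ∫ t in (0 : ℝ)..x, walsh k t = 1 / 2 ^ r * walsh k x * eta (2 ^ r * x) := by
  have hc : (2 : ℝ) ^ (r + 1) ≠ 0 := by positivity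
  have hcx : 0 ≤ x * 2 ^ (r + 1) := by positivity
  calc ∫ t in (0 : ℝ)..x, walsh k t
      = ∫ t in (0 : ℝ)..x, walshStep r k ⌊t * 2 ^ (r + 1)⌋₊ := by
        simp only [walsh_eq_walshStep hk2]
    _ = (2 ^ (r + 1))⁻¹ * ∫ u in (0 : ℝ)..x * 2 ^ (r + 1), walshStep r k ⌊u⌋₊ := by
        rw [intervalIntegral.integral_comp_mul_right (fun u => walshStep r k ⌊u⌋₊) hc, zero_mul,
          smul_eq_mul]
    _ = (2 ^ (r + 1))⁻¹ * (2 * walsh k x * eta (x * 2 ^ (r + 1) / 2)) := by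
        rw [integral_comp_natFloor _ hcx,
          sum_range_add_mul_fract_eq (walshStep_two_mul_add_one hk1 hk2) hcx,
          walsh_eq_walshStep hk2]
    _ = 1 / 2 ^ r * walsh k x * eta (2 ^ r * x) := by
        rw [show x * 2 ^ (r + 1) / 2 = 2 ^ r * x by ring, pow_succ]
        field_simp

lemma abs_integral_walsh_le {r k : ℕ} (hk1 : 2 ^ r ≤ k) (hk2 : k < 2 ^ (r + 1)) {x : ℝ}
    (hx : 0 ≤ x) : |∫ t in (0 : ℝ)..x, walsh k t| ≤ 1 / 2 ^ (r + 1) := by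
  rw [integral_walsh_eq hk1 hk2 hx, abs_mul, abs_mul, abs_walsh, mul_one,
    abs_of_pos (by positivity)]
  calc 1 / 2 ^ r * |eta (2 ^ r * x)| ≤ 1 / 2 ^ r * (1 / 2) := by gcongr; exact abs_eta_le _
    _ = 1 / 2 ^ (r + 1) := by ring

theorem stmt0 (r k : ℕ) (hk1 : 2 ^ r ≤ k) (hk2 : k < 2 ^ (r + 1)) :
    (∀ x ∈ Set.Ico (0 : ℝ) 1,
        (∫ t in (0:ℝ)..x, walsh k t) = 1 / 2 ^ r * walsh k x * eta (2 ^ r * x)) ∧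
      sSup ((fun x : ℝ => |∫ t in (0:ℝ)..x, walsh k t|) '' Set.Icc 0 1) = 1 / 2 ^ (r + 1) := by
  refine ⟨fun x hx => integral_walsh_eq hk1 hk2 hx.1, IsGreatest.csSup_eq ⟨?_, ?_⟩⟩
  · have hx : (0 : ℝ) ≤ 1 / 2 ^ (r + 1) := by positivity
    refine ⟨1 / 2 ^ (r + 1), ⟨hx, div_le_one_of_le₀ (one_le_pow₀ one_le_two) (by positivity)⟩, ?_⟩
    dsimp only
    rw [integral_walsh_eq hk1 hk2 hx, show (2 : ℝ) ^ r * (1 / 2 ^ (r + 1)) = 1 / 2 by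
      rw [pow_succ]; field_simp, eta_one_half, abs_mul, abs_mul, abs_walsh, pow_succ]
    norm_num
    ring
  · rintro _ ⟨x, hx, rfl⟩
    exact abs_integral_walsh_le hk1 hk2 hx.1

end
end

section
/- Let k = 2^{a₁} + 2^{a₂} ∈ N₂∖N₁ with a₁ > a₂ ≥ 0, and let ℓ ∈ {0, 1, …, 2^{a₂}−1}. Then for every x ∈ [0,1): wal_{k+ℓ}(x) = 2^{−a₂/2} · wal_ℓ(x) · Σ_{m=0}^{2^{a₂}−1} w_{k,m,2}(x) = 2^{−a₂/2} · Σ_{m=0}^{2^{a₂}−1} wal_ℓ(m/2^{a₂}) · w_{k,m,2}(x). -/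
/-!
Since `2 ^ a₂` divides `k = 2 ^ a₁ + 2 ^ a₂` and `ℓ < 2 ^ a₂`, the binary digits of `k` and `ℓ`
do not overlap, so `wal_{k+ℓ} = wal_k · wal_ℓ`. The intervals `I(m, a₂)` partition `[0, 1)`, so in
both sums only the term `m = ⌊2 ^ a₂ x⌋` survives; and `wal_ℓ` only reads the first `a₂` binary
digits of its argument, which `x` and `m / 2 ^ a₂` share.
-/

open scoped Classical
open MeasureTheory

noncomputable section

/-- The order-2 localized Walsh function `w_{k,m,2}` for `k = 2^{a₁} + 2^{a₂} ∈ N₂∖N₁`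
(with `a₁ > a₂ ≥ 0`) and `m ∈ L_{k,2}`. -/
def locw (a₁ a₂ m : ℕ) (x : ℝ) : ℝ :=
  Real.sqrt (2 ^ a₂) *
    Set.indicator (Set.Ico ((m : ℝ) / 2 ^ a₂) (((m : ℝ) + 1) / 2 ^ a₂)) (fun _ => (1:ℝ)) x *
    walsh (2 ^ a₁ + 2 ^ a₂) x

lemma walsh_eq_of_size_le {k n : ℕ} (hn : Nat.size k ≤ n) (x : ℝ) :
    walsh k x = (-1 : ℝ) ^ ∑ i ∈ Finset.range n, (Nat.testBit k i).toNat * rdigit x i := by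
  unfold walsh
  congr 1
  refine Finset.sum_subset (Finset.range_subset_range.mpr hn) fun i _ hi => ?_
  rw [Finset.mem_range, not_lt] at hi
  simp [Nat.testBit_lt_two_pow (Nat.size_le.mp hi)]

lemma testBit_toNat_two_pow_mul_add (q : ℕ) {a ℓ : ℕ} (hℓ : ℓ < 2 ^ a) (j : ℕ) :
    ((2 ^ a * q + ℓ).testBit j).toNat = ((2 ^ a * q).testBit j).toNat + (ℓ.testBit j).toNat := by
  rw [Nat.testBit_two_pow_mul_add q hℓ, Nat.testBit_two_pow_mul]
  by_cases hj : j < a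
  · simp [hj]
  · have hℓj : ℓ < 2 ^ j := hℓ.trans_le (Nat.pow_le_pow_right two_pos (not_lt.mp hj))
    simp [hj, not_lt.mp hj, Nat.testBit_lt_two_pow hℓj]

lemma walsh_two_pow_mul_add (q : ℕ) {a ℓ : ℕ} (hℓ : ℓ < 2 ^ a) (x : ℝ) :
    walsh (2 ^ a * q + ℓ) x = walsh (2 ^ a * q) x * walsh ℓ x := by
  set n := Nat.size (2 ^ a * q + ℓ) + Nat.size (2 ^ a * q) + Nat.size ℓ
  rw [walsh_eq_of_size_le (n := n) (by omega), walsh_eq_of_size_le (n := n) (by omega),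
    walsh_eq_of_size_le (n := n) (by omega), ← pow_add, ← Finset.sum_add_distrib]
  congr 1
  refine Finset.sum_congr rfl fun i _ => ?_
  rw [testBit_toNat_two_pow_mul_add q hℓ, Nat.add_mul]

lemma rdigit_floor_mul_two_pow_div (x : ℝ) {a i : ℕ} (hi : i < a) :
    rdigit (⌊x * 2 ^ a⌋₊ / 2 ^ a) i = rdigit x i := by
  obtain ⟨d, rfl⟩ : ∃ d, a = i + 1 + d := ⟨a - (i + 1), by omega⟩
  unfold rdigit
  rw [Int.floor_toNat, Int.floor_toNat]
  have hlhs : (⌊x * 2 ^ (i + 1 + d)⌋₊ : ℝ) / 2 ^ (i + 1 + d) * 2 ^ (i + 1)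
      = (⌊x * 2 ^ (i + 1 + d)⌋₊ : ℝ) / ((2 ^ d : ℕ) : ℝ) := by
    push_cast
    rw [pow_add]
    field_simp
  have hrhs : x * 2 ^ (i + 1) = x * 2 ^ (i + 1 + d) / ((2 ^ d : ℕ) : ℝ) := by
    push_cast
    rw [pow_add _ (i + 1) d, mul_div_assoc, mul_div_cancel_right₀ _ (by positivity)]
  rw [hlhs, hrhs, Nat.floor_div_eq_div, Nat.floor_div_natCast]

lemma walsh_floor_mul_two_pow_div {ℓ a : ℕ} (hℓ : ℓ < 2 ^ a) (x : ℝ) :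
    walsh ℓ (⌊x * 2 ^ a⌋₊ / 2 ^ a) = walsh ℓ x := by
  unfold walsh
  congr 1
  refine Finset.sum_congr rfl fun i hi => ?_
  have hia : i < a := (Finset.mem_range.mp hi).trans_le (Nat.size_le.mpr hℓ)
  rw [rdigit_floor_mul_two_pow_div x hia]

lemma mem_Ico_div_iff_floor_eq {x : ℝ} (hx : 0 ≤ x) {N : ℕ} (hN : 0 < N) (m : ℕ) :
    x ∈ Set.Ico ((m : ℝ) / N) (((m : ℝ) + 1) / N) ↔ ⌊x * N⌋₊ = m := by
  have hN' : (0 : ℝ) < N := by exact_mod_cast hN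
  rw [Nat.floor_eq_iff (by positivity), Set.mem_Ico, div_le_iff₀ hN', lt_div_iff₀ hN']

lemma sum_mul_indicator_Ico_div {x : ℝ} (hx : x ∈ Set.Ico (0 : ℝ) 1) {N : ℕ} (hN : 0 < N)
    (c : ℕ → ℝ) :
    ∑ m ∈ Finset.range N,
        c m * Set.indicator (Set.Ico ((m : ℝ) / N) (((m : ℝ) + 1) / N)) (fun _ => (1 : ℝ)) x
      = c ⌊x * N⌋₊ := by
  have hN' : (0 : ℝ) < N := by exact_mod_cast hN
  have hlt : ⌊x * N⌋₊ < N :=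
    (Nat.floor_lt (by nlinarith [hx.1])).mpr (by nlinarith [hx.2])
  simp only [Set.indicator_apply, mem_Ico_div_iff_floor_eq hx.1 hN, mul_ite, mul_one, mul_zero]
  rw [Finset.sum_ite_eq, if_pos (Finset.mem_range.mpr hlt)]

lemma sum_mul_locw (a₁ a₂ : ℕ) {x : ℝ} (hx : x ∈ Set.Ico (0 : ℝ) 1) (c : ℕ → ℝ) :
    ∑ m ∈ Finset.range (2 ^ a₂), c m * locw a₁ a₂ m x
      = Real.sqrt (2 ^ a₂) * walsh (2 ^ a₁ + 2 ^ a₂) x * c ⌊x * 2 ^ a₂⌋₊ := by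
  have h := sum_mul_indicator_Ico_div hx (Nat.two_pow_pos a₂) c
  push_cast at h
  rw [← h, Finset.mul_sum]
  refine Finset.sum_congr rfl fun m _ => ?_
  unfold locw
  ring

theorem stmt1 (a₁ a₂ ℓ : ℕ) (h : a₂ < a₁) (hℓ : ℓ < 2 ^ a₂) :
    ∀ x ∈ Set.Ico (0 : ℝ) 1,
      walsh (2 ^ a₁ + 2 ^ a₂ + ℓ) x
          = 1 / Real.sqrt (2 ^ a₂) * walsh ℓ x * ∑ m ∈ Finset.range (2 ^ a₂), locw a₁ a₂ m x ∧
        walsh (2 ^ a₁ + 2 ^ a₂ + ℓ) x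
          = 1 / Real.sqrt (2 ^ a₂) *
              ∑ m ∈ Finset.range (2 ^ a₂), walsh ℓ ((m : ℝ) / 2 ^ a₂) * locw a₁ a₂ m x := by
  intro x hx
  have hk : 2 ^ a₁ + 2 ^ a₂ = 2 ^ a₂ * (2 ^ (a₁ - a₂) + 1) := by
    rw [mul_add, ← pow_add, Nat.add_sub_cancel' h.le, mul_one]
  have hsplit : walsh (2 ^ a₁ + 2 ^ a₂ + ℓ) x = walsh (2 ^ a₁ + 2 ^ a₂) x * walsh ℓ x := by
    rw [hk]
    exact walsh_two_pow_mul_add _ hℓ x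
  have hsqrt : Real.sqrt (2 ^ a₂) ≠ 0 := by positivity
  constructor
  · have hsum := sum_mul_locw a₁ a₂ hx fun _ => 1
    simp only [one_mul, mul_one] at hsum
    rw [hsum, hsplit]
    field_simp
  · rw [sum_mul_locw a₁ a₂ hx, walsh_floor_mul_two_pow_div hℓ x, hsplit]
    field_simp

end
end

section
/- For all k, k′ ∈ N₂, m ∈ L_{k,2} and m′ ∈ L_{k′,2}: ∫₀¹ w_{k,m,2}(x) · w_{k′,m′,2}(x) dx = 1 if (k,m) = (k′,m′) and = 0 otherwise. In particular, the order-2 localized Walsh functions form an orthonormal system in L²([0,1)). -/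
open scoped Classical
open MeasureTheory

noncomputable section

/-- `k` is a sum of two distinct powers of two, i.e. `k ∈ N₂ ∖ N₁`. -/
def twoBit (k : ℕ) : Prop := ∃ a₁ a₂ : ℕ, a₂ < a₁ ∧ k = 2 ^ a₁ + 2 ^ a₂

/-- `k ∈ N₁`, i.e. `k = 0` or `k` is a power of two. -/
def inN1 (k : ℕ) : Prop := k = 0 ∨ ∃ a : ℕ, k = 2 ^ a

/-- `k ∈ N₂`. -/
def inN2 (k : ℕ) : Prop := inN1 k ∨ twoBit k

/-- For `k = 2^{a₁} + 2^{a₂}` with `a₁ > a₂`, this is the smaller exponent `a₂`. -/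
def lowExp (k : ℕ) : ℕ := Nat.log2 (k % 2 ^ Nat.log2 k)

/-- The index set `L_{k,2}`. -/
def L2 (k : ℕ) : Set ℕ := if twoBit k then {m | m < 2 ^ lowExp k} else {0}

/-- The order-2 localized Walsh function `w_{k,m,2}`. -/
def w2 (k m : ℕ) (x : ℝ) : ℝ :=
  if twoBit k then
    Real.sqrt (2 ^ lowExp k) *
      Set.indicator (Set.Ico ((m : ℝ) / 2 ^ lowExp k) (((m : ℝ) + 1) / 2 ^ lowExp k))
        (fun _ => (1:ℝ)) x *
      walsh k x
  else walsh k x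

/-!
On each dyadic interval `[j / 2^N, (j + 1) / 2^N)` with `2^N > k, k'` both localized Walsh
functions are constant, so the integral is the average over `j < 2^N` of a product of signs
`±1` and indicators of `j / 2^(N - a) = m`. The diagonal case and the case `k = k'`, `m ≠ m'`
are then immediate. For `k ≠ k'` let `p` be the highest bit of `k ^^^ k'`; since `k, k' ∈ N₂`,
both localization levels are at most `p`. Flipping the digit `ξ_{p+1}` (bit `N - 1 - p` of `j`)
therefore preserves both indicators and reverses the sign of the product, so the sum cancels.
-/

open Finset

-- The paper's `I(m, a)`.
def dyadicIco (a m : ℕ) : Set ℝ := Set.Ico ((m : ℝ) / 2 ^ a) (((m : ℝ) + 1) / 2 ^ a)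

lemma nonneg_of_mem_dyadicIco {a m : ℕ} {x : ℝ} (hx : x ∈ dyadicIco a m) : 0 ≤ x :=
  (by positivity : (0 : ℝ) ≤ m / 2 ^ a).trans hx.1

lemma mem_dyadicIco_iff {a m : ℕ} {x : ℝ} (hx : 0 ≤ x) :
    x ∈ dyadicIco a m ↔ ⌊x * 2 ^ a⌋₊ = m := by
  rw [Nat.floor_eq_iff (by positivity), dyadicIco, Set.mem_Ico, div_le_iff₀ (by positivity),
    lt_div_iff₀ (by positivity)]

lemma floor_mul_two_pow_of_mem_dyadicIco {N j a : ℕ} {x : ℝ} (hx : x ∈ dyadicIco N j)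
    (ha : a ≤ N) : ⌊x * 2 ^ a⌋₊ = j / 2 ^ (N - a) := by
  have hx0 := nonneg_of_mem_dyadicIco hx
  have hscale : x * 2 ^ a = x * 2 ^ N / (2 ^ (N - a) : ℕ) := by
    rw [← Nat.add_sub_cancel' ha, pow_add, Nat.add_sub_cancel_left]
    push_cast
    field_simp
  rw [hscale, Nat.floor_div_natCast, (mem_dyadicIco_iff hx0).1 hx]

lemma mem_dyadicIco_iff_div {N j a m : ℕ} {x : ℝ} (hx : x ∈ dyadicIco N j) (ha : a ≤ N) :
    x ∈ dyadicIco a m ↔ j / 2 ^ (N - a) = m := by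
  rw [mem_dyadicIco_iff (nonneg_of_mem_dyadicIco hx), floor_mul_two_pow_of_mem_dyadicIco hx ha]

lemma integral_eq_sum_of_eqOn_dyadicIco {f : ℝ → ℝ} {v : ℕ → ℝ} (N : ℕ)
    (hf : ∀ j < 2 ^ N, Set.EqOn f (fun _ => v j) (dyadicIco N j)) :
    ∫ x in (0 : ℝ)..1, f x = (∑ j ∈ range (2 ^ N), v j) / 2 ^ N := by
  set t : ℕ → ℝ := fun j => j / 2 ^ N
  have ht : ∀ j, t j ≤ t (j + 1) := fun j => by simp only [t]; gcongr; simp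
  have hpiece : ∀ j < 2 ^ N, ∫ x in (t j)..(t (j + 1)), f x = v j / 2 ^ N := by
    intro j hj
    have hint : ∫ x in Set.Ico (t j) (t (j + 1)), f x = ∫ _ in Set.Ico (t j) (t (j + 1)), v j :=
      setIntegral_congr_fun measurableSet_Ico (by simpa [t, dyadicIco] using hf j hj)
    rw [intervalIntegral.integral_of_le (ht j), ← integral_Ico_eq_integral_Ioc, hint,
      setIntegral_const, Real.volume_real_Ico_of_le (ht j), smul_eq_mul]
    simp only [t]
    push_cast
    ring
  have hintegrable : ∀ j < 2 ^ N, IntervalIntegrable f volume (t j) (t (j + 1)) := by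
    intro j hj
    rw [intervalIntegrable_iff_integrableOn_Ico_of_le (ht j)]
    exact (integrableOn_const measure_Ico_lt_top.ne (C := v j)).congr_fun
      (by simpa [t, dyadicIco] using (hf j hj).symm) measurableSet_Ico
  have h0 : t 0 = 0 := by simp [t]
  have h1 : t (2 ^ N) = 1 := by simp [t]
  rw [← h0, ← h1, ← intervalIntegral.sum_integral_adjacent_intervals hintegrable,
    sum_div]
  exact sum_congr rfl fun j hj => hpiece j (mem_range.1 hj)

lemma rdigit_eq_testBit {N j i : ℕ} {x : ℝ} (hx : x ∈ dyadicIco N j) (hi : i < N) :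
    rdigit x i = (j.testBit (N - 1 - i)).toNat := by
  rw [rdigit, Int.floor_toNat, floor_mul_two_pow_of_mem_dyadicIco hx hi, Nat.toNat_testBit,
    Nat.sub_sub, Nat.add_comm 1]

def dyadicWalsh (k N j : ℕ) : ℝ :=
  (-1) ^ ∑ i ∈ range N, (k.testBit i).toNat * (j.testBit (N - 1 - i)).toNat

lemma walsh_eq_dyadicWalsh {k N j : ℕ} {x : ℝ} (hk : k.size ≤ N) (hx : x ∈ dyadicIco N j) :
    walsh k x = dyadicWalsh k N j := by
  rw [walsh, dyadicWalsh, sum_subset (range_subset_range.2 hk)]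
  · exact congrArg _ <| sum_congr rfl fun i hi => by
      rw [rdigit_eq_testBit hx (mem_range.1 hi)]
  · intro i _ hi
    rw [Nat.testBit_eq_false_of_lt ((Nat.lt_size_self k).trans_le
      (Nat.pow_le_pow_right two_pos (by simpa using hi)))]
    simp

lemma dyadicWalsh_mul_self (k N j : ℕ) : dyadicWalsh k N j * dyadicWalsh k N j = 1 := by
  rw [dyadicWalsh, ← mul_pow]
  norm_num

lemma dyadicWalsh_xor_two_pow {k N j p : ℕ} (hp : p < N) :
    dyadicWalsh k N (j ^^^ 2 ^ (N - 1 - p)) = (-1) ^ (k.testBit p).toNat * dyadicWalsh k N j := by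
  have hsplit : ∀ j' : ℕ, ∑ i ∈ range N, (k.testBit i).toNat * (j'.testBit (N - 1 - i)).toNat =
      (k.testBit p).toNat * (j'.testBit (N - 1 - p)).toNat +
        ∑ i ∈ (range N).erase p, (k.testBit i).toNat * (j'.testBit (N - 1 - i)).toNat :=
    fun j' => (add_sum_erase _ _ (mem_range.2 hp)).symm
  have hrest : ∀ i ∈ (range N).erase p,
      (j ^^^ 2 ^ (N - 1 - p)).testBit (N - 1 - i) = j.testBit (N - 1 - i) := by
    intro i hi
    have : N - 1 - p ≠ N - 1 - i := by
      have := mem_range.1 (mem_of_mem_erase hi)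
      have := ne_of_mem_erase hi
      omega
    simp [Nat.testBit_xor, this]
  rw [dyadicWalsh, dyadicWalsh, hsplit, hsplit, sum_congr rfl fun i hi => by rw [hrest i hi],
    pow_add, pow_add, Nat.testBit_xor, Nat.testBit_two_pow_self]
  cases k.testBit p <;> cases j.testBit (N - 1 - p) <;> simp

lemma testBit_two_pow_add_two_pow {a₁ a₂ t : ℕ} (h : a₂ < a₁) :
    (2 ^ a₁ + 2 ^ a₂).testBit t = decide (t = a₁ ∨ t = a₂) := by
  rcases lt_trichotomy t a₁ with ht | rfl | ht
  · rw [Nat.testBit_two_pow_add_gt ht, Nat.testBit_two_pow]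
    grind
  · rw [Nat.testBit_two_pow_add_eq, Nat.testBit_two_pow]
    simp [h.ne]
  · have : 2 ^ a₁ + 2 ^ a₂ < 2 ^ t := by
      have := Nat.pow_lt_pow_right one_lt_two h
      have := Nat.pow_le_pow_right two_pos (Nat.succ_le_of_lt ht)
      rw [Nat.pow_succ] at this
      omega
    rw [Nat.testBit_lt_two_pow this]
    grind

lemma lowExp_two_pow_add_two_pow {a₁ a₂ : ℕ} (h : a₂ < a₁) : lowExp (2 ^ a₁ + 2 ^ a₂) = a₂ := by
  have hlt : 2 ^ a₂ < 2 ^ a₁ := Nat.pow_lt_pow_right one_lt_two h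
  have hlog : (2 ^ a₁ + 2 ^ a₂).log2 = a₁ := by
    rw [Nat.log2_eq_iff (by positivity), Nat.pow_succ]
    constructor
    · exact Nat.le_add_right _ _
    · omega
  rw [lowExp, hlog, Nat.add_mod_left, Nat.mod_eq_of_lt hlt, Nat.log2_two_pow]

-- `w2 k m` is supported in `dyadicIco (supportLevel k) m`; for `k ∈ N₁` this is `[0, 1)`.
def supportLevel (k : ℕ) : ℕ := if twoBit k then lowExp k else 0

lemma supportLevel_le_size (k : ℕ) : supportLevel k ≤ k.size := by
  unfold supportLevel
  split_ifs with hk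
  · obtain ⟨a₁, a₂, h, rfl⟩ := hk
    rw [lowExp_two_pow_add_two_pow h]
    exact (Nat.lt_size.2 (Nat.le_add_left _ _)).le
  · exact Nat.zero_le _

lemma lt_two_pow_supportLevel_of_mem_L2 {k m : ℕ} (hm : m ∈ L2 k) : m < 2 ^ supportLevel k := by
  unfold L2 at hm
  unfold supportLevel
  split_ifs at hm ⊢
  · exact hm
  · rw [Set.mem_singleton_iff.1 hm]
    exact Nat.one_pos

def localizedDyadicWalsh (k m N j : ℕ) : ℝ :=
  √(2 ^ supportLevel k) * (if j / 2 ^ (N - supportLevel k) = m then 1 else 0) * dyadicWalsh k N j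

lemma w2_eqOn_dyadicIco {k m N j : ℕ} (hk : k.size ≤ N) (hm : m ∈ L2 k) (hj : j < 2 ^ N) :
    Set.EqOn (w2 k m) (fun _ => localizedDyadicWalsh k m N j) (dyadicIco N j) := by
  intro x hx
  have hlevel : supportLevel k ≤ N := (supportLevel_le_size k).trans hk
  unfold w2 localizedDyadicWalsh
  rw [walsh_eq_dyadicWalsh hk hx]
  by_cases ht : twoBit k
  · simp only [supportLevel, ht, if_true] at hlevel ⊢
    have hmem : x ∈ Set.Ico ((m : ℝ) / 2 ^ lowExp k) ((m + 1) / 2 ^ lowExp k) ↔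
        j / 2 ^ (N - lowExp k) = m :=
      mem_dyadicIco_iff_div hx hlevel
    simp only [Set.indicator_apply, hmem]
  · obtain rfl : m = 0 := by simpa [L2, ht] using hm
    simp [supportLevel, ht, Nat.div_eq_of_lt hj]

lemma card_filter_div_eq {d n m : ℕ} (hd : 0 < d) (hm : m < n) :
    #{j ∈ range (n * d) | j / d = m} = d := by
  have : {j ∈ range (n * d) | j / d = m} = Ico (m * d) (m * d + d) := by
    ext j
    simp only [mem_filter, mem_range, mem_Ico, Nat.div_eq_iff hd]
    have : (m + 1) * d ≤ n * d := Nat.mul_le_mul_right d hm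
    constructor <;> intro h <;> refine ⟨?_, ?_⟩ <;> grind
  simp [this]

lemma sum_localizedDyadicWalsh_mul_self {k m N : ℕ} (hm : m < 2 ^ supportLevel k)
    (hN : supportLevel k ≤ N) :
    ∑ j ∈ range (2 ^ N), localizedDyadicWalsh k m N j * localizedDyadicWalsh k m N j = 2 ^ N := by
  set e := supportLevel k
  have hterm : ∀ j, localizedDyadicWalsh k m N j * localizedDyadicWalsh k m N j =
      2 ^ e * if j / 2 ^ (N - e) = m then 1 else 0 := by
    intro j
    have hsqrt : √(2 ^ e : ℝ) * √(2 ^ e) = 2 ^ e := Real.mul_self_sqrt (by positivity)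
    have hwalsh := dyadicWalsh_mul_self k N j
    unfold localizedDyadicWalsh
    split_ifs
    · linear_combination (2 ^ e : ℝ) * hwalsh + dyadicWalsh k N j ^ 2 * hsqrt
    · simp
  have hsplit : 2 ^ N = 2 ^ e * 2 ^ (N - e) := by rw [← pow_add, Nat.add_sub_cancel' hN]
  simp_rw [hterm, ← mul_sum, sum_boole, hsplit, card_filter_div_eq (Nat.two_pow_pos _) hm]
  push_cast
  rw [← pow_add, Nat.add_sub_cancel' hN]

lemma sum_localizedDyadicWalsh_mul_of_ne {k m m' N : ℕ} (hm : m ≠ m') :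
    ∑ j ∈ range (2 ^ N), localizedDyadicWalsh k m N j * localizedDyadicWalsh k m' N j = 0 := by
  refine sum_eq_zero fun j _ => ?_
  unfold localizedDyadicWalsh
  split_ifs with h h' <;> simp_all

lemma div_two_pow_xor_two_pow {j b c : ℕ} (h : b < c) : (j ^^^ 2 ^ b) / 2 ^ c = j / 2 ^ c := by
  refine Nat.eq_of_testBit_eq fun i => ?_
  have : b ≠ c + i := by omega
  simp [← Nat.shiftRight_eq_div_pow, Nat.testBit_xor, this]

lemma localizedDyadicWalsh_xor_two_pow {k m N j p : ℕ} (hp : p < N) (hkp : supportLevel k ≤ p) :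
    localizedDyadicWalsh k m N (j ^^^ 2 ^ (N - 1 - p)) =
      (-1) ^ (k.testBit p).toNat * localizedDyadicWalsh k m N j := by
  rw [localizedDyadicWalsh, localizedDyadicWalsh, dyadicWalsh_xor_two_pow hp,
    div_two_pow_xor_two_pow (by omega)]
  ring

lemma sum_localizedDyadicWalsh_mul_of_testBit_ne {k k' m m' N p : ℕ} (hp : p < N)
    (hkp : supportLevel k ≤ p) (hk'p : supportLevel k' ≤ p) (hbit : k.testBit p ≠ k'.testBit p) :
    ∑ j ∈ range (2 ^ N), localizedDyadicWalsh k m N j * localizedDyadicWalsh k' m' N j = 0 := by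
  set σ : ℕ → ℕ := fun j => j ^^^ 2 ^ (N - 1 - p)
  have hσ_invol : ∀ j, σ (σ j) = j := fun j => by simp [σ]
  have hσ_mem : ∀ j ∈ range (2 ^ N), σ j ∈ range (2 ^ N) := fun j hj =>
    mem_range.2 (Nat.xor_lt_two_pow (mem_range.1 hj) (Nat.pow_lt_pow_right one_lt_two (by omega)))
  have hsign : (-1 : ℝ) ^ (k.testBit p).toNat * (-1) ^ (k'.testBit p).toNat = -1 := by
    cases hb : k.testBit p <;> cases hb' : k'.testBit p <;> simp_all
  have hflip : ∀ j, localizedDyadicWalsh k m N (σ j) * localizedDyadicWalsh k' m' N (σ j) =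
      -(localizedDyadicWalsh k m N j * localizedDyadicWalsh k' m' N j) := fun j => by
    rw [localizedDyadicWalsh_xor_two_pow hp hkp, localizedDyadicWalsh_xor_two_pow hp hk'p]
    linear_combination localizedDyadicWalsh k m N j * localizedDyadicWalsh k' m' N j * hsign
  have hneg := sum_nbij' σ σ hσ_mem hσ_mem (fun j _ => hσ_invol j) (fun j _ => hσ_invol j)
    (fun j _ => by rw [hflip, neg_neg]) (g := fun j =>
      -(localizedDyadicWalsh k m N j * localizedDyadicWalsh k' m' N j))
  rw [sum_neg_distrib] at hneg
  linarith

lemma two_pow_supportLevel_le_xor {k k' : ℕ} (hk' : inN2 k') (hne : k ≠ k') :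
    2 ^ supportLevel k ≤ k ^^^ k' := by
  unfold supportLevel
  split_ifs with hk
  · obtain ⟨a₁, a₂, h, rfl⟩ := hk
    rw [lowExp_two_pow_add_two_pow h]
    by_contra! hlt
    have hagree : ∀ t, a₂ ≤ t → (2 ^ a₁ + 2 ^ a₂).testBit t = k'.testBit t := by
      intro t ht
      have := Nat.testBit_lt_two_pow (hlt.trans_le (Nat.pow_le_pow_right two_pos ht))
      simpa [Nat.testBit_xor] using this
    have h₁ := hagree a₁ h.le
    have h₂ := hagree a₂ le_rfl
    simp only [testBit_two_pow_add_two_pow h, true_or, or_true, decide_true] at h₁ h₂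
    rcases hk' with (rfl | ⟨b, rfl⟩) | ⟨b₁, b₂, hb, rfl⟩
    · simp at h₁
    · simp [Nat.testBit_two_pow] at h₁ h₂
      omega
    · simp [testBit_two_pow_add_two_pow hb] at h₁ h₂
      exact hne (by congr <;> omega)
  · exact Nat.one_le_iff_ne_zero.2 (by simpa using hne)

lemma sum_localizedDyadicWalsh_mul_of_ne_of_inN2 {k k' m m' N : ℕ} (hk : inN2 k)
    (hk' : inN2 k') (hne : k ≠ k') (hkN : k.size ≤ N) (hk'N : k'.size ≤ N) :
    ∑ j ∈ range (2 ^ N), localizedDyadicWalsh k m N j * localizedDyadicWalsh k' m' N j = 0 := by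
  have hn : k ^^^ k' ≠ 0 := by simpa using hne
  refine sum_localizedDyadicWalsh_mul_of_testBit_ne (p := (k ^^^ k').log2) ?_ ?_ ?_ ?_
  · exact (Nat.log2_lt hn).2 (Nat.xor_lt_two_pow (Nat.size_le.1 hkN) (Nat.size_le.1 hk'N))
  · exact (Nat.le_log2 hn).2 (two_pow_supportLevel_le_xor hk' hne)
  · exact (Nat.le_log2 hn).2 (Nat.xor_comm k k' ▸ two_pow_supportLevel_le_xor hk hne.symm)
  · simpa [Nat.testBit_xor] using Nat.testBit_log2 hn

theorem stmt2 (k k' m m' : ℕ) (hk : inN2 k) (hk' : inN2 k')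
    (hm : m ∈ L2 k) (hm' : m' ∈ L2 k') :
    (∫ x in (0:ℝ)..1, w2 k m x * w2 k' m' x) = if (k, m) = (k', m') then 1 else 0 := by
  set N := max k.size k'.size
  have hkN : k.size ≤ N := le_max_left _ _
  have hk'N : k'.size ≤ N := le_max_right _ _
  rw [integral_eq_sum_of_eqOn_dyadicIco N fun j hj x hx => by
    rw [w2_eqOn_dyadicIco hkN hm hj hx, w2_eqOn_dyadicIco hk'N hm' hj hx]]
  split_ifs with h
  · obtain ⟨rfl, rfl⟩ := Prod.mk.inj h
    rw [sum_localizedDyadicWalsh_mul_self (lt_two_pow_supportLevel_of_mem_L2 hm)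
      ((supportLevel_le_size k).trans hkN), div_self (by positivity)]
  · rcases eq_or_ne k k' with rfl | hne
    · rw [sum_localizedDyadicWalsh_mul_of_ne fun hmm => h (by rw [hmm]), zero_div]
    · rw [sum_localizedDyadicWalsh_mul_of_ne_of_inN2 hk hk' hne hkN hk'N, zero_div]

end
end

section
/- Let β ∈ (0,1]. Then μ_β(E(0,0)) = 0, and for every pair (k₁, k₂) ∈ ℕ₀² with (k₁,k₂) ≠ (0,0) one has μ_β(E(k₁, k₂)) ≥ (1+β)·(μ(k₁) + μ(k₂) − 1). -/
open scoped Classical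

noncomputable section

/-- `μ_β(k)`: for `k = 2^{a₁} + 2^{a₂} + ℓ` with `a₁ > a₂ ≥ 0` and `0 ≤ ℓ < 2^{a₂}` this is
`a₁ + β·a₂`; for `k = 2^{a₁}` it is `a₁`; and `μ_β(0) = 0`. -/
def mub (β : ℝ) (k : ℕ) : ℝ :=
  if k = 0 then 0
  else (Nat.log2 k : ℝ) +
    (if k % 2 ^ Nat.log2 k = 0 then 0 else β * (Nat.log2 (k % 2 ^ Nat.log2 k) : ℝ))

/-- The digit interlacing function `E : ℕ₀² → ℕ₀`,
`E(ℓ₁,ℓ₂) = Σ_a (ℓ_{1,a}·2^{2a} + ℓ_{2,a}·2^{2a+1})`. -/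
def interE (l1 l2 : ℕ) : ℕ :=
  ∑ a ∈ Finset.range (Nat.size l1 ⊔ Nat.size l2),
    ((l1.testBit a).toNat * 2 ^ (2 * a) + (l2.testBit a).toNat * 2 ^ (2 * a + 1))

/-!
Write `E(k₁, k₂) = s(k₁) + 2·s(k₂)`, where `s(l)` (`bitSpread l`) reads the binary digits of `l`
in base 4, and `mᵢ = ⌊log₂ kᵢ⌋`. Then `4^{mᵢ} ≤ s(kᵢ) < 4^{mᵢ+1}/3`, so when both `kᵢ ≠ 0` the
bits `2m₁` and `2m₂ + 1` of `E` are set and none above the larger one, whence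
`μ_β(E) ≥ M + β·m` with `M > m` these two positions. Since `β ≤ 1`, this beats
`(1 + β)(m₁ + m₂ - 1)` whichever of the two is larger. If one `kᵢ` vanishes,
`μ_β(E) ≥ ⌊log₂ E⌋ ≥ 2mᵢ` already suffices.
-/
open Finset

section mub

variable {β : ℝ}

lemma log2_le_mub (hβ : 0 ≤ β) (n : ℕ) : (n.log2 : ℝ) ≤ mub β n := by
  unfold mub
  split_ifs with hn
  · simp [hn]
  · simp
  · exact le_add_of_nonneg_right (by positivity)

lemma add_mul_le_mub (hβ : 0 ≤ β) {n M m : ℕ}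
    (hlo : 2 ^ M + 2 ^ m ≤ n) (hhi : n < 2 ^ (M + 1)) :
    (M : ℝ) + β * m ≤ mub β n := by
  have hm_pos : 0 < 2 ^ m := by positivity
  have hn : n ≠ 0 := by omega
  have hlog : n.log2 = M :=
    le_antisymm (Nat.lt_succ_iff.mp ((Nat.log2_lt hn).mpr hhi)) ((Nat.le_log2 hn).mpr (by omega))
  have hM : 2 ^ (M + 1) = 2 ^ M * 2 := pow_succ 2 M
  have hrem : n % 2 ^ M = n - 2 ^ M := by
    rw [Nat.mod_eq_sub_mod (by omega), Nat.mod_eq_of_lt (by omega)]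
  have hrem_ne : n % 2 ^ M ≠ 0 := by omega
  have hm : (m : ℝ) ≤ (n % 2 ^ M).log2 := by
    exact_mod_cast (Nat.le_log2 hrem_ne).mpr (by omega)
  unfold mub
  rw [if_neg hn, hlog, if_neg hrem_ne]
  gcongr

end mub

def bitSpread (l : ℕ) : ℕ :=
  ∑ a ∈ range l.size, (l.testBit a).toNat * 4 ^ a

lemma sum_range_testBit_mul_four_pow {l s : ℕ} (hs : l.size ≤ s) :
    ∑ a ∈ range s, (l.testBit a).toNat * 4 ^ a = bitSpread l := by
  refine (sum_subset (range_subset_range.mpr hs) fun a _ ha => ?_).symm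
  have hla : l < 2 ^ a :=
    (Nat.lt_size_self l).trans_le (Nat.pow_le_pow_right two_pos (by simpa using ha))
  simp [Nat.testBit_lt_two_pow hla]

lemma two_pow_two_mul (a : ℕ) : 2 ^ (2 * a) = 4 ^ a := by
  rw [pow_mul]; norm_num

lemma interE_eq_bitSpread (l₁ l₂ : ℕ) : interE l₁ l₂ = bitSpread l₁ + 2 * bitSpread l₂ := by
  rw [← sum_range_testBit_mul_four_pow (le_sup_left : l₁.size ≤ l₁.size ⊔ l₂.size),
    ← sum_range_testBit_mul_four_pow (le_sup_right : l₂.size ≤ l₁.size ⊔ l₂.size),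
    mul_sum, ← sum_add_distrib]
  refine sum_congr rfl fun a _ => ?_
  rw [pow_succ, two_pow_two_mul]
  ring

lemma three_mul_sum_mul_four_pow_lt (b : ℕ → Bool) (n : ℕ) :
    3 * ∑ a ∈ range n, (b a).toNat * 4 ^ a < 4 ^ n := by
  induction n with
  | zero => simp
  | succ n ih =>
    have hb := Nat.mul_le_mul_right (4 ^ n) (Bool.toNat_le (b n))
    rw [sum_range_succ, pow_succ]
    omega

lemma three_mul_bitSpread_lt (l : ℕ) : 3 * bitSpread l < 4 ^ (l.log2 + 1) :=
  (three_mul_sum_mul_four_pow_lt _ _).trans_le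
    (Nat.pow_le_pow_right (by norm_num) (Nat.size_le.mpr Nat.lt_log2_self))

lemma four_pow_log2_le_bitSpread {l : ℕ} (hl : l ≠ 0) : 4 ^ l.log2 ≤ bitSpread l := by
  have hmem : l.log2 ∈ range l.size := mem_range.mpr (Nat.lt_size.mpr (Nat.log2_self_le hl))
  unfold bitSpread
  simpa [Nat.testBit_log2 hl] using
    single_le_sum (f := fun a => (l.testBit a).toNat * 4 ^ a) (fun _ _ => Nat.zero_le _) hmem

section interE

variable {k₁ k₂ : ℕ}

lemma two_mul_log2_le_log2_interE (h₁ : k₁ ≠ 0) : 2 * k₁.log2 ≤ (interE k₁ k₂).log2 := by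
  have hs₁ := four_pow_log2_le_bitSpread h₁
  have hpos : 0 < 4 ^ k₁.log2 := by positivity
  rw [Nat.le_log2 (by rw [interE_eq_bitSpread]; omega), interE_eq_bitSpread, two_pow_two_mul]
  omega

lemma two_mul_log2_add_one_le_log2_interE (h₂ : k₂ ≠ 0) :
    2 * k₂.log2 + 1 ≤ (interE k₁ k₂).log2 := by
  have hs₂ := four_pow_log2_le_bitSpread h₂
  have hpos : 0 < 4 ^ k₂.log2 := by positivity
  rw [Nat.le_log2 (by rw [interE_eq_bitSpread]; omega), interE_eq_bitSpread, pow_succ,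
    two_pow_two_mul]
  omega

variable {β : ℝ}

lemma le_mub_interE_of_log2_le (hβ : 0 ≤ β) (h₁ : k₁ ≠ 0) (h₂ : k₂ ≠ 0)
    (h : k₁.log2 ≤ k₂.log2) :
    ((2 * k₂.log2 + 1 : ℕ) : ℝ) + β * (2 * k₁.log2 : ℕ) ≤ mub β (interE k₁ k₂) := by
  have hs₁ := four_pow_log2_le_bitSpread h₁
  have hs₂ := four_pow_log2_le_bitSpread h₂
  have ht₁ := three_mul_bitSpread_lt k₁
  have ht₂ := three_mul_bitSpread_lt k₂
  have hmono : 4 ^ (k₁.log2 + 1) ≤ 4 ^ (k₂.log2 + 1) := Nat.pow_le_pow_right (by norm_num) (by omega)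
  apply add_mul_le_mub hβ
  · rw [interE_eq_bitSpread, pow_succ, two_pow_two_mul, two_pow_two_mul]
    omega
  · rw [interE_eq_bitSpread, show 2 * k₂.log2 + 1 + 1 = 2 * (k₂.log2 + 1) by ring,
      two_pow_two_mul]
    omega

lemma le_mub_interE_of_log2_lt (hβ : 0 ≤ β) (h₁ : k₁ ≠ 0) (h₂ : k₂ ≠ 0)
    (h : k₂.log2 < k₁.log2) :
    ((2 * k₁.log2 : ℕ) : ℝ) + β * (2 * k₂.log2 + 1 : ℕ) ≤ mub β (interE k₁ k₂) := by
  have hs₁ := four_pow_log2_le_bitSpread h₁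
  have hs₂ := four_pow_log2_le_bitSpread h₂
  have ht₁ := three_mul_bitSpread_lt k₁
  have ht₂ := three_mul_bitSpread_lt k₂
  have hmono : 4 ^ (k₂.log2 + 1) ≤ 4 ^ k₁.log2 := Nat.pow_le_pow_right (by norm_num) h
  have hsucc : 4 ^ (k₁.log2 + 1) = 4 ^ k₁.log2 * 4 := pow_succ _ _
  apply add_mul_le_mub hβ
  · rw [interE_eq_bitSpread, pow_succ, two_pow_two_mul, two_pow_two_mul]
    omega
  · rw [interE_eq_bitSpread, pow_succ, two_pow_two_mul]
    omega

end interE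

theorem stmt9 (β : ℝ) (hβ : β ∈ Set.Ioc (0:ℝ) 1) :
    mub β (interE 0 0) = 0 ∧
      ∀ k₁ k₂ : ℕ, (k₁, k₂) ≠ (0, 0) →
        (1 + β) * ((Nat.log2 k₁ : ℝ) + (Nat.log2 k₂ : ℝ) - 1) ≤ mub β (interE k₁ k₂) := by
  obtain ⟨hβ₀, hβ₁⟩ := hβ
  refine ⟨by simp [interE, mub], fun k₁ k₂ hk => ?_⟩
  have hmub := log2_le_mub hβ₀.le (interE k₁ k₂)
  rcases eq_or_ne k₁ 0 with rfl | h₁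
  · have hlog : ((2 * k₂.log2 + 1 : ℕ) : ℝ) ≤ (interE 0 k₂).log2 :=
      Nat.cast_le.mpr (two_mul_log2_add_one_le_log2_interE (by simpa using hk))
    push_cast [Nat.log2_zero] at hlog ⊢
    nlinarith
  rcases eq_or_ne k₂ 0 with rfl | h₂
  · have hlog : ((2 * k₁.log2 : ℕ) : ℝ) ≤ (interE k₁ 0).log2 :=
      Nat.cast_le.mpr (two_mul_log2_le_log2_interE h₁)
    push_cast [Nat.log2_zero] at hlog ⊢
    nlinarith
  rcases le_or_gt k₁.log2 k₂.log2 with h | h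
  · have hR : (k₁.log2 : ℝ) ≤ k₂.log2 := Nat.cast_le.mpr h
    refine le_trans ?_ (le_mub_interE_of_log2_le hβ₀.le h₁ h₂ h)
    push_cast
    nlinarith [mul_nonneg (sub_nonneg.mpr hβ₁) (sub_nonneg.mpr hR)]
  · have hR : (k₂.log2 : ℝ) ≤ k₁.log2 := Nat.cast_le.mpr h.le
    refine le_trans ?_ (le_mub_interE_of_log2_lt hβ₀.le h₁ h₂ h)
    push_cast
    nlinarith [mul_nonneg (sub_nonneg.mpr hβ₁) (sub_nonneg.mpr hR)]

end
end

section
/- Let β ∈ (0,1] and s ∈ ℕ. For every vector k = (k₁,…,k_{2s}) ∈ ℕ₀^{2s} one has μ_β(E(k)) ≥ (1+β)·(μ(k) − #{j ∈ {1,…,s} : (k_{2j−1}, k_{2j}) ≠ (0,0)}), where μ and μ_β are extended to vectors by summing over the coordinates. -/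
open scoped Classical

noncomputable section

lemma interE_ext (l1 l2 n : ℕ) (h : Nat.size l1 ⊔ Nat.size l2 ≤ n) :
    interE l1 l2 = ∑ a ∈ Finset.range n,
      ((l1.testBit a).toNat * 2 ^ (2 * a) + (l2.testBit a).toNat * 2 ^ (2 * a + 1)) := by
  refine Finset.sum_subset (Finset.range_subset_range.2 h) ?_
  intro a ha hna
  simp only [Finset.mem_range, not_lt] at hna
  have h1 : l1.testBit a = false :=
    Nat.testBit_lt_two_pow (lt_of_lt_of_le (Nat.lt_size_self l1)
      (Nat.pow_le_pow_right (by norm_num) (le_sup_left.trans hna)))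
  have h2 : l2.testBit a = false :=
    Nat.testBit_lt_two_pow (lt_of_lt_of_le (Nat.lt_size_self l2)
      (Nat.pow_le_pow_right (by norm_num) (le_sup_right.trans hna)))
  simp [h1, h2]

lemma size_le_size_div_two_succ (n : ℕ) : Nat.size n ≤ Nat.size (n / 2) + 1 := by
  rw [Nat.size_le]
  have h1 := Nat.lt_size_self (n / 2)
  have h2 : n ≤ 2 * (n / 2) + 1 := by omega
  calc n ≤ 2 * (n / 2) + 1 := h2
    _ < 2 * 2 ^ Nat.size (n / 2) := by omega
    _ = 2 ^ (Nat.size (n / 2) + 1) := by ring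

lemma interE_rec (l1 l2 : ℕ) :
    interE l1 l2 = l1 % 2 + 2 * (l2 % 2) + 4 * interE (l1 / 2) (l2 / 2) := by
  have hb : Nat.size l1 ⊔ Nat.size l2 ≤ (Nat.size (l1/2) ⊔ Nat.size (l2/2)) + 1 := by
    have h1 := size_le_size_div_two_succ l1
    have h2 := size_le_size_div_two_succ l2
    omega
  rw [interE_ext l1 l2 _ hb, Finset.sum_range_succ' _ (Nat.size (l1/2) ⊔ Nat.size (l2/2))]
  have hmod : ∀ m : ℕ, (m.testBit 0).toNat = m % 2 := by
    intro m
    rw [Nat.testBit_zero]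
    rcases Nat.mod_two_eq_zero_or_one m with h | h <;> simp [h]
  rw [interE]
  have hterm : ∀ a ∈ Finset.range (Nat.size (l1/2) ⊔ Nat.size (l2/2)),
      ((l1.testBit (a+1)).toNat * 2 ^ (2 * (a+1)) + (l2.testBit (a+1)).toNat * 2 ^ (2 * (a+1) + 1))
      = 4 * (((l1/2).testBit a).toNat * 2 ^ (2 * a) + ((l2/2).testBit a).toNat * 2 ^ (2 * a + 1)) := by
    intro a _
    rw [show a + 1 = a.succ from rfl, Nat.testBit_succ, Nat.testBit_succ]
    simp only [Nat.succ_eq_add_one]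
    ring
  rw [Finset.sum_congr rfl hterm, ← Finset.mul_sum, hmod, hmod]
  ring

lemma testBit_interE_even (l1 l2 i : ℕ) : (interE l1 l2).testBit (2 * i) = l1.testBit i := by
  induction i generalizing l1 l2 with
  | zero =>
    rw [interE_rec, Nat.mul_zero, Nat.testBit_zero, Nat.testBit_zero]
    have h1 := Nat.mod_two_eq_zero_or_one l1
    have h2 := Nat.mod_two_eq_zero_or_one l2
    have h : (l1 % 2 + 2 * (l2 % 2) + 4 * interE (l1 / 2) (l2 / 2)) % 2 = l1 % 2 := by omega
    rw [h]
  | succ i ih =>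
    rw [interE_rec]
    have he : 2 * (i + 1) = (2 * i).succ.succ := by omega
    rw [he, Nat.testBit_succ, Nat.testBit_succ]
    have h : (l1 % 2 + 2 * (l2 % 2) + 4 * interE (l1 / 2) (l2 / 2)) / 2 / 2
        = interE (l1 / 2) (l2 / 2) := by
      have h1 := Nat.mod_two_eq_zero_or_one l1
      have h2 := Nat.mod_two_eq_zero_or_one l2
      omega
    rw [h, ih]
    rw [show l1.testBit (i+1) = (l1/2).testBit i from Nat.testBit_succ l1 i]

lemma testBit_interE_odd (l1 l2 i : ℕ) : (interE l1 l2).testBit (2 * i + 1) = l2.testBit i := by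
  induction i generalizing l1 l2 with
  | zero =>
    rw [interE_rec]
    rw [show 2 * 0 + 1 = Nat.succ 0 from rfl, Nat.testBit_succ, Nat.testBit_zero, Nat.testBit_zero]
    have h1 := Nat.mod_two_eq_zero_or_one l1
    have h2 := Nat.mod_two_eq_zero_or_one l2
    have h : (l1 % 2 + 2 * (l2 % 2) + 4 * interE (l1 / 2) (l2 / 2)) / 2 % 2 = l2 % 2 := by omega
    rw [h]
  | succ i ih =>
    rw [interE_rec]
    have he : 2 * (i + 1) + 1 = (2 * i + 1).succ.succ := by omega
    rw [he, Nat.testBit_succ, Nat.testBit_succ]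
    have h : (l1 % 2 + 2 * (l2 % 2) + 4 * interE (l1 / 2) (l2 / 2)) / 2 / 2
        = interE (l1 / 2) (l2 / 2) := by
      have h1 := Nat.mod_two_eq_zero_or_one l1
      have h2 := Nat.mod_two_eq_zero_or_one l2
      omega
    rw [h, ih]
    rw [show l2.testBit (i+1) = (l2/2).testBit i from Nat.testBit_succ l2 i]

lemma testBit_le_log2 {n p : ℕ} (h : n.testBit p = true) : p ≤ Nat.log2 n := by
  have h2 : 2 ^ p ≤ n := Nat.ge_two_pow_of_testBit h
  have hn : n ≠ 0 := by
    have := Nat.two_pow_pos p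
    omega
  exact (Nat.le_log2 hn).2 h2

lemma testBit_log2 {n : ℕ} (hn : n ≠ 0) : n.testBit (Nat.log2 n) = true := by
  have h1 : 2 ^ Nat.log2 n ≤ n := (Nat.le_log2 hn).1 le_rfl
  have h2 : n < 2 ^ (Nat.log2 n + 1) := (Nat.log2_lt hn).1 (Nat.lt_succ_self _)
  have hd : n / 2 ^ Nat.log2 n = 1 := by
    apply Nat.div_eq_of_lt_le
    · omega
    · calc n < 2 ^ (Nat.log2 n + 1) := h2
        _ = (1 + 1) * 2 ^ Nat.log2 n := by ring
  rw [Nat.testBit_eq_decide_div_mod_eq, hd]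
  decide

lemma ne_zero_of_testBit {n p : ℕ} (h : n.testBit p = true) : n ≠ 0 := by
  have h2 : 2 ^ p ≤ n := Nat.ge_two_pow_of_testBit h
  have := Nat.two_pow_pos p
  omega

/-- Key per-pair inequality. -/
lemma key (β : ℝ) (hβ0 : 0 < β) (hβ1 : β ≤ 1) (l1 l2 : ℕ) :
    (1 + β) * ((Nat.log2 l1 : ℝ) + (Nat.log2 l2 : ℝ)
        - (if (l1, l2) ≠ (0, 0) then (1:ℝ) else 0))
      ≤ mub β (interE l1 l2) := by
  by_cases h0 : l1 = 0 ∧ l2 = 0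
  · obtain ⟨h1, h2⟩ := h0
    subst h1; subst h2
    simp [interE, mub]
  have hind : (if (l1, l2) ≠ (0, 0) then (1:ℝ) else 0) = 1 := by
    rw [if_pos]; simp only [ne_eq, Prod.mk.injEq]; tauto
  rw [hind]
  have hNne : interE l1 l2 ≠ 0 := by
    rcases (not_and_or.1 h0) with h | h
    · refine ne_zero_of_testBit (p := 2 * Nat.log2 l1) ?_
      rw [testBit_interE_even]; exact testBit_log2 h
    · refine ne_zero_of_testBit (p := 2 * Nat.log2 l2 + 1) ?_
      rw [testBit_interE_odd]; exact testBit_log2 h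
  set N := interE l1 l2 with hN
  have hmub_ge : (Nat.log2 N : ℝ) ≤ mub β N := by
    rw [mub, if_neg hNne]
    have h : (0:ℝ) ≤ (if N % 2 ^ Nat.log2 N = 0 then 0
        else β * (Nat.log2 (N % 2 ^ Nat.log2 N) : ℝ)) := by
      split
      · exact le_refl 0
      · exact mul_nonneg hβ0.le (Nat.cast_nonneg _)
    linarith
  by_cases h1 : l1 = 0
  · have h2 : l2 ≠ 0 := by tauto
    have hb : N.testBit (2 * Nat.log2 l2 + 1) = true := by
      rw [hN, testBit_interE_odd]; exact testBit_log2 h2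
    have hle : 2 * Nat.log2 l2 + 1 ≤ Nat.log2 N := testBit_le_log2 hb
    have hle' : (2 * (Nat.log2 l2 : ℝ) + 1) ≤ (Nat.log2 N : ℝ) := by exact_mod_cast hle
    rw [h1, Nat.log2_zero]
    push_cast
    nlinarith [mul_nonneg (sub_nonneg.2 hβ1) (Nat.cast_nonneg (α := ℝ) (Nat.log2 l2)),
      Nat.cast_nonneg (α := ℝ) (Nat.log2 l2)]
  · by_cases h2 : l2 = 0
    · have hb : N.testBit (2 * Nat.log2 l1) = true := by
        rw [hN, testBit_interE_even]; exact testBit_log2 h1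
      have hle : 2 * Nat.log2 l1 ≤ Nat.log2 N := testBit_le_log2 hb
      have hle' : (2 * (Nat.log2 l1 : ℝ)) ≤ (Nat.log2 N : ℝ) := by exact_mod_cast hle
      rw [h2, Nat.log2_zero]
      push_cast
      nlinarith [mul_nonneg (sub_nonneg.2 hβ1) (Nat.cast_nonneg (α := ℝ) (Nat.log2 l1)),
        Nat.cast_nonneg (α := ℝ) (Nat.log2 l1)]
    · set a := Nat.log2 l1 with ha
      set b := Nat.log2 l2 with hbdef
      have hbA : N.testBit (2 * a) = true := by
        rw [hN, testBit_interE_even]; exact testBit_log2 h1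
      have hbB : N.testBit (2 * b + 1) = true := by
        rw [hN, testBit_interE_odd]; exact testBit_log2 h2
      have hleA : 2 * a ≤ Nat.log2 N := testBit_le_log2 hbA
      have hleB : 2 * b + 1 ≤ Nat.log2 N := testBit_le_log2 hbB
      set p := min (2 * a) (2 * b + 1) with hp
      have hplt : p < Nat.log2 N := by
        rcases le_or_gt (2 * a) (2 * b + 1) with h | h <;> omega
      have hbp : N.testBit p = true := by
        rcases le_or_gt (2 * a) (2 * b + 1) with h | h
        · rw [show p = 2 * a by omega]; exact hbA
        · rw [show p = 2 * b + 1 by omega]; exact hbB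
      set R := N % 2 ^ Nat.log2 N with hR
      have hRbit : R.testBit p = true := by
        rw [hR, Nat.testBit_mod_two_pow]
        simp [hplt, hbp]
      have hRne : R ≠ 0 := ne_zero_of_testBit hRbit
      have hRlog : p ≤ Nat.log2 R := testBit_le_log2 hRbit
      have hmub_eq : mub β N = (Nat.log2 N : ℝ) + β * (Nat.log2 R : ℝ) := by
        rw [mub, if_neg hNne, if_neg hRne]
      rw [hmub_eq]
      have c1 : (2 * (a:ℝ)) ≤ (Nat.log2 N : ℝ) := by exact_mod_cast hleA
      have c2 : (2 * (b:ℝ) + 1) ≤ (Nat.log2 N : ℝ) := by exact_mod_cast hleB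
      have c3 : ((p:ℝ)) ≤ (Nat.log2 R : ℝ) := by exact_mod_cast hRlog
      rcases le_or_gt (2 * a) (2 * b + 1) with h | h
      · have hpe : (p : ℝ) = 2 * a := by
          rw [show p = 2 * a by omega]; push_cast; ring
        have hab : (a:ℝ) ≤ b := by
          have hn : a ≤ b := by omega
          exact_mod_cast hn
        nlinarith [mul_nonneg (sub_nonneg.2 hβ1) (sub_nonneg.2 hab)]
      · have hpe : (p : ℝ) = 2 * b + 1 := by
          rw [show p = 2 * b + 1 by omega]; push_cast; ring
        have hab : (b:ℝ) + 1 ≤ a := by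
          have hn : b + 1 ≤ a := by omega
          exact_mod_cast hn
        nlinarith [mul_nonneg (sub_nonneg.2 hβ1) (by linarith : (0:ℝ) ≤ (a:ℝ) - b - 1)]

lemma sum_range_two_mul (g : ℕ → ℝ) (s : ℕ) :
    ∑ j ∈ Finset.range (2 * s), g j = ∑ i ∈ Finset.range s, (g (2*i) + g (2*i+1)) := by
  induction s with
  | zero => simp
  | succ n ih =>
    rw [show 2*(n+1) = 2*n+1+1 by ring, Finset.sum_range_succ, Finset.sum_range_succ,
      Finset.sum_range_succ, ih]
    ring

theorem stmt10 (β : ℝ) (hβ : β ∈ Set.Ioc (0:ℝ) 1) (s : ℕ) (hs : 0 < s)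
    (k : Fin (2 * s) → ℕ) :
    (1 + β) *
        ((∑ j, (Nat.log2 (k j) : ℝ)) -
          ((Finset.univ.filter fun i : Fin s =>
            (k ⟨2 * i.1, by have := i.isLt; omega⟩,
              k ⟨2 * i.1 + 1, by have := i.isLt; omega⟩) ≠ (0, 0)).card : ℝ))
      ≤ ∑ i : Fin s,
          mub β (interE (k ⟨2 * i.1, by have := i.isLt; omega⟩)
            (k ⟨2 * i.1 + 1, by have := i.isLt; omega⟩)) := by
  obtain ⟨hβ0, hβ1⟩ := hβ
  set g : ℕ → ℝ := fun j => if h : j < 2 * s then (Nat.log2 (k ⟨j, h⟩) : ℝ) else 0 with hg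
  have hsum : (∑ j : Fin (2 * s), (Nat.log2 (k j) : ℝ))
      = ∑ i : Fin s, ((Nat.log2 (k ⟨2 * i.1, by have := i.isLt; omega⟩) : ℝ)
          + (Nat.log2 (k ⟨2 * i.1 + 1, by have := i.isLt; omega⟩) : ℝ)) := by
    have e1 : (∑ j : Fin (2 * s), (Nat.log2 (k j) : ℝ)) = ∑ j : Fin (2 * s), g j.1 := by
      apply Finset.sum_congr rfl
      intro j _
      rw [hg]
      simp only [j.isLt, dif_pos, Fin.eta]
    rw [e1, Fin.sum_univ_eq_sum_range g (2 * s), sum_range_two_mul,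
      ← Fin.sum_univ_eq_sum_range (fun i => g (2*i) + g (2*i+1)) s]
    apply Finset.sum_congr rfl
    intro i _
    have hi1 : 2 * i.1 < 2 * s := by have := i.isLt; omega
    have hi2 : 2 * i.1 + 1 < 2 * s := by have := i.isLt; omega
    rw [hg]
    simp only [hi1, hi2, dif_pos]
  have hcard : ((Finset.univ.filter fun i : Fin s =>
      (k ⟨2 * i.1, by have := i.isLt; omega⟩,
        k ⟨2 * i.1 + 1, by have := i.isLt; omega⟩) ≠ (0, 0)).card : ℝ)
      = ∑ i : Fin s, (if (k ⟨2 * i.1, by have := i.isLt; omega⟩,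
          k ⟨2 * i.1 + 1, by have := i.isLt; omega⟩) ≠ (0, 0) then (1:ℝ) else 0) := by
    rw [Finset.card_filter]
    push_cast
    rfl
  rw [hsum, hcard, ← Finset.sum_sub_distrib, Finset.mul_sum]
  apply Finset.sum_le_sum
  intro i _
  exact key β hβ0 hβ1 _ _

end
end

section
/- Let 0 < σ ≤ ρ. For every k = 2^{a₁} + 2^{a₂} ∈ N₂∖N₁ with a₁ > a₂ ≥ 0 and every m ∈ L_{k,2}: sup_{x∈ℝ} |W̃^{(φ_σ)}_{k,m,2}(x)|/φ_ρ(x) ≤ 2^{σ²/ρ²}·√(π/8)·ρ · 2^{a₂/2}/2^{a₁ + β₁·a₂}, where β₁ := 1 − σ²/ρ². -/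
open scoped Classical
open MeasureTheory
noncomputable section

/-- The twice cumulated function `W̃_{k,m,2}`. -/
def Wtil (a₁ a₂ m : ℕ) (x : ℝ) : ℝ :=
  ∫ y in (0:ℝ)..x, ∫ t in (0:ℝ)..y, locw a₁ a₂ m t

/-- The Gaussian probability density with mean `0` and standard deviation `σ`. -/
def gpdf (σ x : ℝ) : ℝ :=
  (Real.sqrt (2 * Real.pi) * σ)⁻¹ * Real.exp (-(x ^ 2) / (2 * σ ^ 2))

/-- The Gaussian cumulative distribution function `Φ_σ`. -/
def gcdf (σ x : ℝ) : ℝ := ∫ t in Set.Iic x, gpdf σ t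

/-!
On its support `[m/2^a₂, (m+1)/2^a₂)` the function `w = w_{k,m,2}` is `±2^{a₂/2}`; it changes
sign under a shift by one dyadic cell of length `2^{-(a₁+1)}` (from an even cell), and under a
shift by half of its support. The first rule makes the primitive `W` vanish on `2^{-a₁}ℕ`, so
`|W| ≤ 2^{a₂/2} 2^{-(a₁+1)}`; the second makes `W` antisymmetric, so `∫ W = 0` over the support.
Hence `W̃` vanishes off the support and `|W̃ u| ≤ 2^{a₂/2} 2^{-(a₁+1)} min(u, 1-u, 2^{-(a₂+1)})`.
At `u = Φ_σ(x)` the tail bound `min(Φ_σ, 1-Φ_σ) ≤ e^{-x²/2σ²}/2` and the interpolation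
`min(p, q) ≤ p^t q^{1-t}` with `t = σ²/ρ²` turn `e^{-x²/2σ²}` into `e^{-x²/2ρ²} ∝ φ_ρ(x)`.
-/

lemma integral_eq_zero_of_add_eq_neg {f : ℝ → ℝ} {a δ : ℝ} (hδ : 0 ≤ δ)
    (hf : IntervalIntegrable f volume a (a + δ + δ))
    (hanti : ∀ t ∈ Set.Ioo a (a + δ), f (t + δ) = -f t) :
    ∫ t in a..a + δ + δ, f t = 0 := by
  have hab : Set.uIcc a (a + δ) ⊆ Set.uIcc a (a + δ + δ) :=
    Set.uIcc_subset_uIcc_left (by rw [Set.uIcc_of_le (by linarith)]; constructor <;> linarith)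
  have hbc : Set.uIcc (a + δ) (a + δ + δ) ⊆ Set.uIcc a (a + δ + δ) :=
    Set.uIcc_subset_uIcc_right (by rw [Set.uIcc_of_le (by linarith)]; constructor <;> linarith)
  have hshift : ∫ t in a + δ..a + δ + δ, f t = -∫ t in a..a + δ, f t := by
    rw [← intervalIntegral.integral_comp_add_right, ← intervalIntegral.integral_neg]
    exact intervalIntegral.integral_congr_Ioo_of_le (by linarith) hanti
  rw [← intervalIntegral.integral_add_adjacent_intervals (hf.mono_set hab) (hf.mono_set hbc),
    hshift, add_neg_cancel]

lemma abs_integral_le_mul_min {f : ℝ → ℝ} {a b u M : ℝ}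
    (hf : ∀ t ∈ Set.Icc a b, |f t| ≤ M) (hint : IntervalIntegrable f volume a b)
    (hzero : ∫ t in a..b, f t = 0) (hu : u ∈ Set.Icc a b) :
    |∫ t in a..u, f t| ≤ M * min (u - a) (b - u) := by
  have hM : 0 ≤ M := (abs_nonneg _).trans (hf a ⟨le_rfl, hu.1.trans hu.2⟩)
  have hbound : ∀ x y, a ≤ x → x ≤ y → y ≤ b → |∫ t in x..y, f t| ≤ M * (y - x) :=
    fun x y hax hxy hyb => by
      simpa [abs_of_nonneg (sub_nonneg.2 hxy)] using
        intervalIntegral.norm_integral_le_of_norm_le_const (f := f) (C := M) (a := x) (b := y)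
          fun t ht => by
            rw [Set.uIoc_of_le hxy] at ht
            exact hf t ⟨hax.trans ht.1.le, ht.2.trans hyb⟩
  have hsplit : ∫ t in a..u, f t = -∫ t in u..b, f t := by
    rw [eq_neg_iff_add_eq_zero, intervalIntegral.integral_add_adjacent_intervals
      (hint.mono_set (Set.uIcc_subset_uIcc_left (Set.uIcc_of_le (hu.1.trans hu.2) ▸ hu)))
      (hint.mono_set (Set.uIcc_subset_uIcc_right (Set.uIcc_of_le (hu.1.trans hu.2) ▸ hu))),
      hzero]
  rw [mul_min_of_nonneg _ _ hM]
  refine le_min (hbound a u le_rfl hu.1 hu.2) ?_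
  rw [hsplit, abs_neg]
  exact hbound u b hu.1 hu.2 le_rfl

lemma natFloor_mul_two_pow_eq_div {b n : ℕ} (hbn : b ≤ n) (x : ℝ) :
    ⌊x * 2 ^ b⌋₊ = ⌊x * 2 ^ n⌋₊ / 2 ^ (n - b) := by
  rw [← Nat.floor_div_natCast]
  congr 1
  push_cast
  rw [mul_div_assoc, div_eq_mul_inv, ← pow_sub₀ _ two_ne_zero (Nat.sub_le n b),
    Nat.sub_sub_self hbn]

lemma natFloor_add_inv_two_pow_mul {b n : ℕ} (hbn : b ≤ n) {t : ℝ} (ht : 0 ≤ t) :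
    ⌊(t + ((2 : ℝ) ^ b)⁻¹) * 2 ^ n⌋₊ = ⌊t * 2 ^ n⌋₊ + 2 ^ (n - b) := by
  have hshift : ((2 : ℝ) ^ b)⁻¹ * 2 ^ n = ((2 ^ (n - b) : ℕ) : ℝ) := by
    rw [Nat.cast_pow, Nat.cast_ofNat, pow_sub₀ _ two_ne_zero hbn, mul_comm]
  rw [add_mul, hshift, Nat.floor_add_natCast (by positivity)]

lemma mem_Ico_div_two_pow_iff {t : ℝ} (ht : 0 ≤ t) (a m : ℕ) :
    t ∈ Set.Ico ((m : ℝ) / 2 ^ a) (((m : ℝ) + 1) / 2 ^ a) ↔ ⌊t * 2 ^ a⌋₊ = m := by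
  rw [Nat.floor_eq_iff (by positivity), Set.mem_Ico, div_le_iff₀ (by positivity),
    lt_div_iff₀ (by positivity)]

lemma two_mul_add_one_div_two_pow {e : ℕ} (he : 1 ≤ e) (i : ℕ) :
    (2 * i + 1) / 2 ^ e = 2 * i / 2 ^ e := by
  obtain ⟨e, rfl⟩ := Nat.exists_eq_add_of_le' he
  rw [pow_succ', ← Nat.div_div_eq_div_mul, ← Nat.div_div_eq_div_mul]
  congr 1
  omega

lemma rdigit_eq_natFloor_div {b n : ℕ} (hbn : b ≤ n) (x : ℝ) :
    rdigit x b = ⌊x * 2 ^ (n + 1)⌋₊ / 2 ^ (n - b) % 2 := by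
  rw [rdigit, Int.floor_toNat, natFloor_mul_two_pow_eq_div (by omega : b + 1 ≤ n + 1),
    Nat.add_sub_add_right]

lemma testBit_two_pow_add_two_pow_s15 {a b : ℕ} (hba : b < a) (i : ℕ) :
    (2 ^ a + 2 ^ b).testBit i = (decide (a = i) || decide (b = i)) := by
  rw [← mul_one (2 ^ a), Nat.two_pow_add_eq_or_of_lt (Nat.pow_lt_pow_right one_lt_two hba),
    mul_one, Nat.testBit_or, Nat.testBit_two_pow, Nat.testBit_two_pow]

lemma walsh_two_pow_add_two_pow {a b : ℕ} (hba : b < a) (x : ℝ) :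
    walsh (2 ^ a + 2 ^ b) x = (-1) ^ rdigit x a * (-1) ^ rdigit x b := by
  have hlt : 2 ^ b < 2 ^ a := Nat.pow_lt_pow_right one_lt_two hba
  have hsize : Nat.size (2 ^ a + 2 ^ b) = a + 1 := by
    refine le_antisymm (Nat.size_le.2 (by rw [pow_succ]; omega)) ?_
    exact Nat.lt_size.2 (Nat.le_add_right _ _)
  rw [walsh, hsize, ← pow_add, Finset.sum_eq_add a b hba.ne']
  · simp [testBit_two_pow_add_two_pow_s15 hba, hba.ne']
  · intro c _ hc
    simp [testBit_two_pow_add_two_pow_s15 hba, Ne.symm hc.1, Ne.symm hc.2]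
  · simp
  · simp [hba.trans (Nat.lt_succ_self a)]

lemma measurable_walsh (k : ℕ) : Measurable (walsh k) := by
  unfold walsh rdigit
  measurability

def locwCell (a₁ a₂ m j : ℕ) : ℝ :=
  Real.sqrt (2 ^ a₂) * (if j / 2 ^ (a₁ + 1 - a₂) = m then 1 else 0) *
    ((-1) ^ j * (-1) ^ (j / 2 ^ (a₁ - a₂)))

section Locw

variable {a₁ a₂ m : ℕ}

lemma locw_eq_locwCell (h : a₂ < a₁) {t : ℝ} (ht : 0 ≤ t) :
    locw a₁ a₂ m t = locwCell a₁ a₂ m ⌊t * 2 ^ (a₁ + 1)⌋₊ := by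
  have hind : Set.indicator (Set.Ico ((m : ℝ) / 2 ^ a₂) (((m : ℝ) + 1) / 2 ^ a₂))
      (fun _ => (1 : ℝ)) t = if ⌊t * 2 ^ (a₁ + 1)⌋₊ / 2 ^ (a₁ + 1 - a₂) = m then 1 else 0 := by
    simp only [Set.indicator_apply, mem_Ico_div_two_pow_iff ht,
      natFloor_mul_two_pow_eq_div (by omega : a₂ ≤ a₁ + 1)]
  rw [locw, locwCell, hind, walsh_two_pow_add_two_pow h, rdigit_eq_natFloor_div le_rfl,
    rdigit_eq_natFloor_div h.le, Nat.sub_self, pow_zero, Nat.div_one,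
    ← neg_one_pow_eq_pow_mod_two, ← neg_one_pow_eq_pow_mod_two]

lemma locwCell_two_mul_add_one (h : a₂ < a₁) (i : ℕ) :
    locwCell a₁ a₂ m (2 * i + 1) = -locwCell a₁ a₂ m (2 * i) := by
  rw [locwCell, locwCell, two_mul_add_one_div_two_pow (by omega),
    two_mul_add_one_div_two_pow (by omega), pow_succ]
  ring

lemma locwCell_add_two_pow (h : a₂ < a₁) {j : ℕ} (hj : j / 2 ^ (a₁ - a₂) = 2 * m) :
    locwCell a₁ a₂ m (j + 2 ^ (a₁ - a₂)) = -locwCell a₁ a₂ m j := by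
  have hsplit : a₁ + 1 - a₂ = (a₁ - a₂) + 1 := by omega
  have hdiv : (j + 2 ^ (a₁ - a₂)) / 2 ^ (a₁ - a₂) = 2 * m + 1 := by
    rw [Nat.add_div_right _ (Nat.two_pow_pos _), hj]
  have hcell : ∀ k, k / 2 ^ (a₁ + 1 - a₂) = k / 2 ^ (a₁ - a₂) / 2 := fun k => by
    rw [hsplit, pow_succ, Nat.div_div_eq_div_mul]
  have heven : Even (2 ^ (a₁ - a₂)) := (Nat.even_pow' (by omega)).2 even_two
  rw [locwCell, locwCell, hcell, hcell, hdiv, hj, pow_add, heven.neg_one_pow, pow_succ]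
  simp only [show (2 * m + 1) / 2 = 2 * m / 2 by omega]
  ring

lemma abs_locw_le (t : ℝ) : |locw a₁ a₂ m t| ≤ Real.sqrt (2 ^ a₂) := by
  have hwalsh : |walsh (2 ^ a₁ + 2 ^ a₂) t| = 1 := by simp [walsh]
  rw [locw, abs_mul, abs_mul, hwalsh, mul_one, abs_of_nonneg (Real.sqrt_nonneg _)]
  refine mul_le_of_le_one_right (Real.sqrt_nonneg _) ?_
  rw [Set.indicator_apply]
  split_ifs <;> simp

lemma intervalIntegrable_locw (x y : ℝ) : IntervalIntegrable (locw a₁ a₂ m) volume x y := by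
  refine (intervalIntegrable_const (c := Real.sqrt (2 ^ a₂))).mono_fun' ?_
    (Filter.Eventually.of_forall fun t => ?_)
  · exact ((measurable_const.mul (measurable_const.indicator measurableSet_Ico)).mul
      (measurable_walsh _)).aestronglyMeasurable
  · simpa using abs_locw_le t

lemma locw_eq_zero_of_notMem {t : ℝ}
    (ht : t ∉ Set.Ico ((m : ℝ) / 2 ^ a₂) (((m : ℝ) + 1) / 2 ^ a₂)) : locw a₁ a₂ m t = 0 := by
  rw [locw, Set.indicator_of_notMem ht, mul_zero, zero_mul]

lemma locw_add_cell (h : a₂ < a₁) {t : ℝ} (ht : 0 ≤ t) {i : ℕ}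
    (hi : ⌊t * 2 ^ (a₁ + 1)⌋₊ = 2 * i) :
    locw a₁ a₂ m (t + ((2 : ℝ) ^ (a₁ + 1))⁻¹) = -locw a₁ a₂ m t := by
  rw [locw_eq_locwCell h (by positivity), locw_eq_locwCell h ht,
    natFloor_add_inv_two_pow_mul le_rfl ht, hi, Nat.sub_self, pow_zero,
    locwCell_two_mul_add_one h]

lemma locw_add_half_support (h : a₂ < a₁) {t : ℝ} (ht : 0 ≤ t)
    (hm : ⌊t * 2 ^ (a₂ + 1)⌋₊ = 2 * m) :
    locw a₁ a₂ m (t + ((2 : ℝ) ^ (a₂ + 1))⁻¹) = -locw a₁ a₂ m t := by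
  have hcell : ⌊t * 2 ^ (a₁ + 1)⌋₊ / 2 ^ (a₁ - a₂) = 2 * m := by
    rw [← hm, natFloor_mul_two_pow_eq_div (by omega : a₂ + 1 ≤ a₁ + 1) t,
      Nat.add_sub_add_right]
  rw [locw_eq_locwCell h (by positivity), locw_eq_locwCell h ht,
    natFloor_add_inv_two_pow_mul (by omega) ht, Nat.add_sub_add_right,
    locwCell_add_two_pow h hcell]

/-- The paper's `W_{k,m,2}`; `Wtil a₁ a₂ m u` unfolds to `∫ y in 0..u, locwPrimitive a₁ a₂ m y`. -/
def locwPrimitive (a₁ a₂ m : ℕ) (y : ℝ) : ℝ := ∫ t in (0 : ℝ)..y, locw a₁ a₂ m t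

lemma locwPrimitive_sub (x y : ℝ) :
    locwPrimitive a₁ a₂ m y - locwPrimitive a₁ a₂ m x = ∫ t in x..y, locw a₁ a₂ m t :=
  intervalIntegral.integral_interval_sub_left (intervalIntegrable_locw _ _)
    (intervalIntegrable_locw _ _)

lemma locwPrimitive_eq_integral_of_eq_zero {x : ℝ} (hx : locwPrimitive a₁ a₂ m x = 0) (y : ℝ) :
    locwPrimitive a₁ a₂ m y = ∫ t in x..y, locw a₁ a₂ m t := by
  rw [← locwPrimitive_sub, hx, sub_zero]

lemma continuous_locwPrimitive : Continuous (locwPrimitive a₁ a₂ m) :=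
  intervalIntegral.continuous_primitive intervalIntegrable_locw 0

lemma locwPrimitive_natCast_div_two_pow (h : a₂ < a₁) (j : ℕ) :
    locwPrimitive a₁ a₂ m (j / 2 ^ a₁) = 0 := by
  induction j with
  | zero => simp [locwPrimitive]
  | succ j ih =>
    have hleft : (j : ℝ) / 2 ^ a₁ = ((2 * j : ℕ) : ℝ) / 2 ^ (a₁ + 1) := by
      push_cast; field_simp; ring
    have hmid : (j : ℝ) / 2 ^ a₁ + (2 ^ (a₁ + 1))⁻¹ = ((2 * j : ℕ) + 1 : ℝ) / 2 ^ (a₁ + 1) := by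
      rw [hleft, add_div, one_div]
    have hright : ((j + 1 : ℕ) : ℝ) / 2 ^ a₁
        = j / 2 ^ a₁ + (2 ^ (a₁ + 1))⁻¹ + (2 ^ (a₁ + 1))⁻¹ := by
      push_cast; field_simp; ring
    rw [hright, locwPrimitive_eq_integral_of_eq_zero ih]
    refine integral_eq_zero_of_add_eq_neg (by positivity) (intervalIntegrable_locw _ _)
      fun t ht => ?_
    have ht0 : 0 ≤ t := (by positivity : (0 : ℝ) ≤ j / 2 ^ a₁).trans ht.1.le
    refine locw_add_cell h ht0 (i := j) ?_
    rw [← mem_Ico_div_two_pow_iff ht0, ← hleft, ← hmid]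
    exact ⟨ht.1.le, ht.2⟩

lemma locwPrimitive_natCast_div_two_pow_of_le (h : a₂ < a₁) {b : ℕ} (hb : b ≤ a₁) (j : ℕ) :
    locwPrimitive a₁ a₂ m (j / 2 ^ b) = 0 := by
  have hgrid : (j : ℝ) / 2 ^ b = ((j * 2 ^ (a₁ - b) : ℕ) : ℝ) / 2 ^ a₁ := by
    rw [Nat.cast_mul, Nat.cast_pow, Nat.cast_ofNat, mul_div_assoc, pow_sub₀ _ two_ne_zero hb]
    field_simp
  rw [hgrid, locwPrimitive_natCast_div_two_pow h]

lemma abs_locwPrimitive_le (h : a₂ < a₁) {y : ℝ} (hy : 0 ≤ y) :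
    |locwPrimitive a₁ a₂ m y| ≤ Real.sqrt (2 ^ a₂) * ((2 : ℝ) ^ (a₁ + 1))⁻¹ := by
  set j := ⌊y * 2 ^ a₁⌋₊
  have hp : (j : ℝ) / 2 ^ a₁ ≤ y := by
    rw [div_le_iff₀ (by positivity)]; exact Nat.floor_le (by positivity)
  have hq : y ≤ ((j + 1 : ℕ) : ℝ) / 2 ^ a₁ := by
    rw [le_div_iff₀ (by positivity)]; push_cast; exact (Nat.lt_floor_add_one _).le
  have hzero : ∫ t in (j : ℝ) / 2 ^ a₁..((j + 1 : ℕ) : ℝ) / 2 ^ a₁, locw a₁ a₂ m t = 0 := by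
    rw [← locwPrimitive_eq_integral_of_eq_zero (locwPrimitive_natCast_div_two_pow h j),
      locwPrimitive_natCast_div_two_pow h]
  have hwidth : ((j + 1 : ℕ) : ℝ) / 2 ^ a₁ - j / 2 ^ a₁ = 2 * ((2 : ℝ) ^ (a₁ + 1))⁻¹ := by
    push_cast; field_simp; ring
  rw [locwPrimitive_eq_integral_of_eq_zero (locwPrimitive_natCast_div_two_pow h j)]
  refine (abs_integral_le_mul_min (fun t _ => abs_locw_le t) (intervalIntegrable_locw _ _)
    hzero ⟨hp, hq⟩).trans (mul_le_mul_of_nonneg_left ?_ (Real.sqrt_nonneg _))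
  rw [min_le_iff]
  by_contra! hcon
  linarith [hcon.1, hcon.2]

lemma locwPrimitive_eq_zero_of_le {y : ℝ} (hy0 : 0 ≤ y) (hy : y ≤ (m : ℝ) / 2 ^ a₂) :
    locwPrimitive a₁ a₂ m y = 0 := by
  rw [locwPrimitive, intervalIntegral.integral_congr_Ioo_of_le hy0 (g := fun _ => 0)
    fun t ht => locw_eq_zero_of_notMem fun hmem => (hmem.1.trans_lt ht.2).not_ge hy]
  simp

lemma locwPrimitive_eq_zero_of_ge (h : a₂ < a₁) {y : ℝ} (hy : ((m : ℝ) + 1) / 2 ^ a₂ ≤ y) :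
    locwPrimitive a₁ a₂ m y = 0 := by
  have hR := locwPrimitive_natCast_div_two_pow_of_le (m := m) h h.le (m + 1)
  push_cast at hR
  rw [locwPrimitive_eq_integral_of_eq_zero hR, intervalIntegral.integral_congr_Ioo_of_le hy
    (g := fun _ => 0) fun t ht => locw_eq_zero_of_notMem fun hmem => hmem.2.not_ge ht.1.le]
  simp

lemma locwPrimitive_add_half_support (h : a₂ < a₁) {y : ℝ}
    (hy : y ∈ Set.Ioo ((m : ℝ) / 2 ^ a₂) ((m : ℝ) / 2 ^ a₂ + ((2 : ℝ) ^ (a₂ + 1))⁻¹)) :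
    locwPrimitive a₁ a₂ m (y + ((2 : ℝ) ^ (a₂ + 1))⁻¹) = -locwPrimitive a₁ a₂ m y := by
  have hleft : (m : ℝ) / 2 ^ a₂ = ((2 * m : ℕ) : ℝ) / 2 ^ (a₂ + 1) := by
    push_cast; field_simp; ring
  have hmid : (m : ℝ) / 2 ^ a₂ + ((2 : ℝ) ^ (a₂ + 1))⁻¹
      = ((2 * m : ℕ) + 1 : ℝ) / 2 ^ (a₂ + 1) := by
    rw [hleft, add_div, one_div]
  have hL : locwPrimitive a₁ a₂ m (m / 2 ^ a₂) = 0 :=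
    locwPrimitive_natCast_div_two_pow_of_le h h.le m
  have hM : locwPrimitive a₁ a₂ m (m / 2 ^ a₂ + ((2 : ℝ) ^ (a₂ + 1))⁻¹) = 0 := by
    rw [hmid, ← Nat.cast_succ]
    exact locwPrimitive_natCast_div_two_pow_of_le h (by omega) _
  rw [locwPrimitive_eq_integral_of_eq_zero hM, locwPrimitive_eq_integral_of_eq_zero hL,
    ← intervalIntegral.integral_neg, ← intervalIntegral.integral_comp_add_right]
  refine intervalIntegral.integral_congr_Ioo_of_le hy.1.le fun t ht => ?_
  have ht0 : 0 ≤ t := (by positivity : (0 : ℝ) ≤ m / 2 ^ a₂).trans ht.1.le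
  refine locw_add_half_support h ht0 ?_
  rw [← mem_Ico_div_two_pow_iff ht0, ← hleft, ← hmid]
  exact ⟨ht.1.le, ht.2.trans hy.2⟩

lemma integral_locwPrimitive_eq_zero (h : a₂ < a₁) :
    ∫ y in (m : ℝ) / 2 ^ a₂..((m : ℝ) + 1) / 2 ^ a₂, locwPrimitive a₁ a₂ m y = 0 := by
  have hR : ((m : ℝ) + 1) / 2 ^ a₂
      = (m : ℝ) / 2 ^ a₂ + ((2 : ℝ) ^ (a₂ + 1))⁻¹ + ((2 : ℝ) ^ (a₂ + 1))⁻¹ := by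
    field_simp; ring
  rw [hR]
  exact integral_eq_zero_of_add_eq_neg (by positivity)
    (continuous_locwPrimitive.intervalIntegrable _ _)
    fun y hy => locwPrimitive_add_half_support h hy

lemma Wtil_eq_integral_of_eq_zero {x : ℝ} (hx : Wtil a₁ a₂ m x = 0) (u : ℝ) :
    Wtil a₁ a₂ m u = ∫ y in x..u, locwPrimitive a₁ a₂ m y := by
  rw [← sub_zero (Wtil a₁ a₂ m u), ← hx]
  exact intervalIntegral.integral_interval_sub_left
    (continuous_locwPrimitive.intervalIntegrable _ _)
    (continuous_locwPrimitive.intervalIntegrable _ _)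

lemma Wtil_eq_zero_of_le {u : ℝ} (hu0 : 0 ≤ u) (hu : u ≤ (m : ℝ) / 2 ^ a₂) :
    Wtil a₁ a₂ m u = 0 := by
  refine (intervalIntegral.integral_congr (g := fun _ => 0) fun y hy => ?_).trans (by simp)
  rw [Set.uIcc_of_le hu0] at hy
  exact locwPrimitive_eq_zero_of_le hy.1 (hy.2.trans hu)

lemma Wtil_eq_zero_of_ge (h : a₂ < a₁) {u : ℝ} (hu : ((m : ℝ) + 1) / 2 ^ a₂ ≤ u) :
    Wtil a₁ a₂ m u = 0 := by
  have hL : Wtil a₁ a₂ m (m / 2 ^ a₂) = 0 := Wtil_eq_zero_of_le (by positivity) le_rfl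
  have hR : Wtil a₁ a₂ m ((m + 1) / 2 ^ a₂) = 0 := by
    rw [Wtil_eq_integral_of_eq_zero hL, integral_locwPrimitive_eq_zero h]
  rw [Wtil_eq_integral_of_eq_zero hR]
  refine (intervalIntegral.integral_congr (g := fun _ => 0) fun y hy => ?_).trans (by simp)
  rw [Set.uIcc_of_le hu] at hy
  exact locwPrimitive_eq_zero_of_ge h hy.1

lemma abs_Wtil_le (h : a₂ < a₁) {u : ℝ} (hu0 : 0 ≤ u) (hu1 : u ≤ 1) :
    |Wtil a₁ a₂ m u| ≤ Real.sqrt (2 ^ a₂) * ((2 : ℝ) ^ (a₁ + 1))⁻¹ *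
      min (min u (1 - u)) ((2 : ℝ) ^ (a₂ + 1))⁻¹ := by
  set L : ℝ := m / 2 ^ a₂
  set R : ℝ := (m + 1) / 2 ^ a₂
  have hbound : 0 ≤ Real.sqrt (2 ^ a₂) * ((2 : ℝ) ^ (a₁ + 1))⁻¹ *
      min (min u (1 - u)) ((2 : ℝ) ^ (a₂ + 1))⁻¹ := by
    have : 0 ≤ 1 - u := by linarith
    positivity
  rcases le_or_gt u L with huL | hLu
  · rwa [Wtil_eq_zero_of_le hu0 huL, abs_zero]
  rcases le_or_gt R u with hRu | huR
  · rwa [Wtil_eq_zero_of_ge h hRu, abs_zero]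
  have hR1 : R ≤ 1 := by
    have hm : m < 2 ^ a₂ := by
      have : (m : ℝ) < 2 ^ a₂ := by
        rw [← div_lt_one (by positivity)]; exact hLu.trans_le hu1
      exact_mod_cast this
    rw [div_le_one (by positivity)]
    exact_mod_cast hm
  have hwidth : R - L = 2 * ((2 : ℝ) ^ (a₂ + 1))⁻¹ := by
    simp only [L, R]; field_simp; ring
  rw [Wtil_eq_integral_of_eq_zero (Wtil_eq_zero_of_le (by positivity) le_rfl)]
  refine (abs_integral_le_mul_min (fun y hy => abs_locwPrimitive_le h ?_)
    (continuous_locwPrimitive.intervalIntegrable _ _) (integral_locwPrimitive_eq_zero h)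
    ⟨hLu.le, huR.le⟩).trans (mul_le_mul_of_nonneg_left ?_ (by positivity))
  · exact (by positivity : (0 : ℝ) ≤ L).trans hy.1
  refine le_min (le_min ((min_le_left _ _).trans ?_) ((min_le_right _ _).trans ?_)) ?_
  · linarith [(by positivity : (0 : ℝ) ≤ L)]
  · linarith
  · rw [min_le_iff]
    by_contra! hcon
    linarith [hcon.1, hcon.2]

end Locw

section Gaussian

open ProbabilityTheory

variable {σ : ℝ}

lemma gpdf_eq_gaussianPDFReal (hσ : 0 < σ) : gpdf σ = gaussianPDFReal 0 (σ ^ 2).toNNReal := by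
  ext x
  rw [gpdf, gaussianPDFReal, Real.coe_toNNReal _ (by positivity), sub_zero,
    Real.sqrt_mul (by positivity : (0 : ℝ) ≤ 2 * Real.pi) (σ ^ 2), Real.sqrt_sq hσ.le]

lemma gpdf_pos (hσ : 0 < σ) (x : ℝ) : 0 < gpdf σ x := by
  rw [gpdf_eq_gaussianPDFReal hσ]
  exact gaussianPDFReal_pos _ _ _ (by simpa using hσ.ne')

lemma integrable_gpdf (hσ : 0 < σ) : Integrable (gpdf σ) := by
  rw [gpdf_eq_gaussianPDFReal hσ]
  exact integrable_gaussianPDFReal _ _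

lemma integral_gpdf (hσ : 0 < σ) : ∫ x, gpdf σ x = 1 := by
  rw [gpdf_eq_gaussianPDFReal hσ]
  exact integral_gaussianPDFReal_eq_one _ (by simpa using hσ.ne')

lemma gpdf_neg (x : ℝ) : gpdf σ (-x) = gpdf σ x := by
  simp [gpdf]

lemma gcdf_nonneg (hσ : 0 < σ) (x : ℝ) : 0 ≤ gcdf σ x :=
  setIntegral_nonneg measurableSet_Iic fun t _ => (gpdf_pos hσ t).le

lemma gcdf_le_one (hσ : 0 < σ) (x : ℝ) : gcdf σ x ≤ 1 :=
  integral_gpdf hσ ▸ setIntegral_le_integral (integrable_gpdf hσ)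
    (Filter.Eventually.of_forall fun t => (gpdf_pos hσ t).le)

lemma one_sub_gcdf (hσ : 0 < σ) (x : ℝ) : 1 - gcdf σ x = gcdf σ (-x) := by
  have hsplit := integral_add_compl (measurableSet_Iic (a := x)) (integrable_gpdf hσ)
  rw [Set.compl_Iic, integral_gpdf hσ] at hsplit
  rw [gcdf, gcdf, ← hsplit, add_sub_cancel_left, ← integral_comp_neg_Ioi]
  simp only [gpdf_neg]

lemma gpdf_le_mul_gpdf_sub (hσ : 0 < σ) {x t : ℝ} (hxt : 0 ≤ x * (t - x)) :
    gpdf σ t ≤ Real.exp (-x ^ 2 / (2 * σ ^ 2)) * gpdf σ (t - x) := by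
  rw [gpdf, gpdf, mul_left_comm, ← Real.exp_add]
  refine mul_le_mul_of_nonneg_left (Real.exp_le_exp.2 ?_) (by positivity)
  rw [← add_div]
  exact div_le_div_of_nonneg_right (by nlinarith) (by positivity)

lemma gcdf_le_of_nonpos (hσ : 0 < σ) {x : ℝ} (hx : x ≤ 0) :
    gcdf σ x ≤ Real.exp (-x ^ 2 / (2 * σ ^ 2)) / 2 := by
  have hhalf : gcdf σ 0 = 1 / 2 := by
    have := one_sub_gcdf hσ 0
    rw [neg_zero] at this
    linarith
  have hshift : ∫ t in Set.Iic x, gpdf σ (t - x) = gcdf σ 0 := by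
    have hpre : (fun t => t - x) ⁻¹' Set.Iic 0 = Set.Iic x := by
      ext t; simp
    rw [← hpre]
    exact (measurePreserving_sub_right volume x).setIntegral_preimage_emb
      (measurableEmbedding_subRight x) _ _
  calc gcdf σ x ≤ ∫ t in Set.Iic x, Real.exp (-x ^ 2 / (2 * σ ^ 2)) * gpdf σ (t - x) :=
        setIntegral_mono_on (integrable_gpdf hσ).integrableOn
          (((integrable_gpdf hσ).comp_sub_right x).const_mul _).integrableOn measurableSet_Iic
          fun t ht => gpdf_le_mul_gpdf_sub hσ (mul_nonneg_of_nonpos_of_nonpos hx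
            (sub_nonpos.2 ht))
    _ = Real.exp (-x ^ 2 / (2 * σ ^ 2)) / 2 := by
        rw [integral_const_mul, hshift, hhalf, mul_one_div]

lemma min_gcdf_one_sub_gcdf_le (hσ : 0 < σ) (x : ℝ) :
    min (gcdf σ x) (1 - gcdf σ x) ≤ Real.exp (-x ^ 2 / (2 * σ ^ 2)) / 2 := by
  rcases le_or_gt x 0 with hx | hx
  · exact (min_le_left _ _).trans (gcdf_le_of_nonpos hσ hx)
  · rw [one_sub_gcdf hσ]
    simpa using (min_le_right _ _).trans (gcdf_le_of_nonpos hσ (neg_nonpos.2 hx.le))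

end Gaussian

lemma min_le_rpow_mul_rpow {p q t : ℝ} (hp : 0 ≤ p) (hq : 0 ≤ q) (ht0 : 0 ≤ t) (ht1 : t ≤ 1) :
    min p q ≤ p ^ t * q ^ (1 - t) := by
  calc min p q = min p q ^ t * min p q ^ (1 - t) := by
        rw [← Real.rpow_add' (le_min hp hq) (by norm_num), add_sub_cancel, Real.rpow_one]
    _ ≤ p ^ t * q ^ (1 - t) := by
        have hmin := le_min hp hq
        exact mul_le_mul (Real.rpow_le_rpow hmin (min_le_left _ _) ht0)
          (Real.rpow_le_rpow hmin (min_le_right _ _) (sub_nonneg.2 ht1)) (by positivity)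
          (by positivity)

lemma exp_div_two_rpow {σ ρ : ℝ} (hσ : σ ≠ 0) (hρ : ρ ≠ 0) (x : ℝ) :
    (Real.exp (-x ^ 2 / (2 * σ ^ 2)) / 2) ^ (σ ^ 2 / ρ ^ 2)
      = Real.exp (-x ^ 2 / (2 * ρ ^ 2)) / 2 ^ (σ ^ 2 / ρ ^ 2) := by
  rw [Real.div_rpow (Real.exp_pos _).le zero_le_two, ← Real.exp_mul]
  congr 2
  field_simp

lemma two_rpow_div_two_rpow_eq (a₁ a₂ : ℕ) (t : ℝ) :
    (2 : ℝ) ^ ((a₂ : ℝ) / 2) / (2 : ℝ) ^ ((a₁ : ℝ) + (1 - t) * a₂)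
      = 4 * (Real.sqrt (2 ^ a₂) * ((2 : ℝ) ^ (a₁ + 1))⁻¹ * ((2 : ℝ) ^ (a₂ + 1))⁻¹ ^ (1 - t) /
        2 ^ t) := by
  have h1 : Real.sqrt (2 ^ a₂) = (2 : ℝ) ^ ((a₂ : ℝ) / 2) := by
    rw [Real.sqrt_eq_rpow, ← Real.rpow_natCast, ← Real.rpow_mul zero_le_two]
    ring_nf
  have h2 : ∀ n : ℕ, ((2 : ℝ) ^ n)⁻¹ = (2 : ℝ) ^ (-(n : ℝ)) := fun n => by
    rw [Real.rpow_neg zero_le_two, Real.rpow_natCast]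
  have h4 : (4 : ℝ) = 2 ^ (2 : ℝ) := by norm_num
  rw [h1, h2, h2, h4, ← Real.rpow_mul zero_le_two, ← Real.rpow_add two_pos,
    ← Real.rpow_add two_pos, ← Real.rpow_sub two_pos, ← Real.rpow_sub two_pos,
    ← Real.rpow_add two_pos]
  congr 1
  push_cast
  ring

lemma abs_Wtil_gcdf_le {σ t : ℝ} {a₁ a₂ m : ℕ} (hσ : 0 < σ) (h : a₂ < a₁) (ht0 : 0 ≤ t)
    (ht1 : t ≤ 1) (x : ℝ) :
    |Wtil a₁ a₂ m (gcdf σ x)| ≤ Real.sqrt (2 ^ a₂) * ((2 : ℝ) ^ (a₁ + 1))⁻¹ *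
      ((Real.exp (-x ^ 2 / (2 * σ ^ 2)) / 2) ^ t * ((2 : ℝ) ^ (a₂ + 1))⁻¹ ^ (1 - t)) :=
  calc |Wtil a₁ a₂ m (gcdf σ x)|
      ≤ Real.sqrt (2 ^ a₂) * ((2 : ℝ) ^ (a₁ + 1))⁻¹ *
          min (min (gcdf σ x) (1 - gcdf σ x)) ((2 : ℝ) ^ (a₂ + 1))⁻¹ :=
        abs_Wtil_le h (gcdf_nonneg hσ x) (gcdf_le_one hσ x)
    _ ≤ Real.sqrt (2 ^ a₂) * ((2 : ℝ) ^ (a₁ + 1))⁻¹ *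
          min (Real.exp (-x ^ 2 / (2 * σ ^ 2)) / 2) ((2 : ℝ) ^ (a₂ + 1))⁻¹ := by
        gcongr
        exact min_gcdf_one_sub_gcdf_le hσ x
    _ ≤ _ := by
        gcongr
        exact min_le_rpow_mul_rpow (by positivity) (by positivity) ht0 ht1

lemma interpolated_bound_eq_mul_gpdf {σ ρ : ℝ} (hσ : σ ≠ 0) (hρ : ρ ≠ 0) (a₁ a₂ : ℕ) (x : ℝ) :
    Real.sqrt (2 ^ a₂) * ((2 : ℝ) ^ (a₁ + 1))⁻¹ *
      ((Real.exp (-x ^ 2 / (2 * σ ^ 2)) / 2) ^ (σ ^ 2 / ρ ^ 2) *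
        ((2 : ℝ) ^ (a₂ + 1))⁻¹ ^ (1 - σ ^ 2 / ρ ^ 2))
      = Real.sqrt (Real.pi / 8) * ρ *
          ((2 : ℝ) ^ ((a₂ : ℝ) / 2) / (2 : ℝ) ^ ((a₁ : ℝ) + (1 - σ ^ 2 / ρ ^ 2) * a₂)) *
            gpdf ρ x := by
  have hsqrt : Real.sqrt (Real.pi / 8) = Real.sqrt (2 * Real.pi) / 4 := by
    rw [show 2 * Real.pi = 4 ^ 2 * (Real.pi / 8) by ring, Real.sqrt_mul (by norm_num),
      Real.sqrt_sq (by norm_num)]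
    ring
  rw [exp_div_two_rpow hσ hρ, gpdf, hsqrt, two_rpow_div_two_rpow_eq]
  field_simp

theorem stmt15_general (σ ρ : ℝ) (hσ : 0 < σ) (hσρ : σ ≤ ρ)
    (a₁ a₂ m : ℕ) (h : a₂ < a₁) :
    ∀ x : ℝ, |Wtil a₁ a₂ m (gcdf σ x)| / gpdf ρ x
      ≤ (2:ℝ) ^ (σ ^ 2 / ρ ^ 2) * Real.sqrt (Real.pi / 8) * ρ *
          ((2:ℝ) ^ ((a₂ : ℝ) / 2) / (2:ℝ) ^ ((a₁ : ℝ) + (1 - σ ^ 2 / ρ ^ 2) * a₂)) := by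
  intro x
  have hρ : 0 < ρ := hσ.trans_le hσρ
  have ht1 : σ ^ 2 / ρ ^ 2 ≤ 1 :=
    div_le_one_of_le₀ (pow_le_pow_left₀ hσ.le hσρ 2) (by positivity)
  have hgpdf := gpdf_pos hρ x
  rw [div_le_iff₀ hgpdf]
  calc |Wtil a₁ a₂ m (gcdf σ x)|
      ≤ _ := abs_Wtil_gcdf_le hσ h (by positivity) ht1 x
    _ = Real.sqrt (Real.pi / 8) * ρ *
          ((2 : ℝ) ^ ((a₂ : ℝ) / 2) / (2 : ℝ) ^ ((a₁ : ℝ) + (1 - σ ^ 2 / ρ ^ 2) * a₂)) *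
            gpdf ρ x := interpolated_bound_eq_mul_gpdf hσ.ne' hρ.ne' a₁ a₂ x
    _ ≤ _ := by
        gcongr
        exact le_mul_of_one_le_left (by positivity) (Real.one_le_rpow one_le_two (by positivity))

theorem stmt15 (σ ρ : ℝ) (hσ : 0 < σ) (hσρ : σ ≤ ρ)
    (a₁ a₂ m : ℕ) (h : a₂ < a₁) (hm : m < 2 ^ a₂) :
    ∀ x : ℝ, |Wtil a₁ a₂ m (gcdf σ x)| / gpdf ρ x
      ≤ (2:ℝ) ^ (σ ^ 2 / ρ ^ 2) * Real.sqrt (Real.pi / 8) * ρ *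
          ((2:ℝ) ^ ((a₂ : ℝ) / 2) / (2:ℝ) ^ ((a₁ : ℝ) + (1 - σ ^ 2 / ρ ^ 2) * a₂)) :=
  stmt15_general σ ρ hσ hσρ a₁ a₂ m h

end
end
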